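/- arXiv:0909.2047 — 6 statements merged into one kernel-verified Lean document; each statement's English description precedes it below -/
import Mathlib

section
/- Let 𝔛 be a normed vector space and (X,ρ) an infinite, locally finite metric space with ρ(x,y) ≥ 1 for all distinct x,y ∈ X. Suppose there are finite metric spaces (Y_n,σ_n), n ∈ ℕ, with σ_n(u,v) ≥ 1 for distinct u,v and diam(Y_n,σ_n) → ∞, injections φ_n : Y_n → X, a real L ≥ 1 and reals r_n ≥ 1 such that: (i) (1/L)·r_n·σ_n(u,v) ≤ ρ(φ_n(u),φ_n(v)) ≤ L·r_n·σ_n(u,v) for all u,v ∈ Y_n and all n; (ii) for every ε > 0 there is C_ε > 0 with r_n ≤ C_ε·diam(Y_n,σ_n)^ε for all n; (iii) there are η ∈ (0,1] and c > 0 such that every injection of Y_n into 𝔛 has distortion at least c·diam(Y_n,σ_n)^η, for all n. Then for every α > 1 − η and every K > 0 there is no map f : X → 𝔛 satisfying K·ρ(x,y)^α ≤ ‖f(x) − f(y)‖ ≤ ρ(x,y) for all x,y ∈ X; that is, the compression exponent α*_𝔛(X,ρ) is at most 1 − η. -/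
open scoped BigOperators
open scoped Classical
open MeasureTheory Filter
open scoped ENNReal NNReal

noncomputable section

/-- The length of the shortest word in the alphabet `Gens` leading from `x` to `y`
under the (not necessarily associative) multiplication `mul`. -/
def wordLen {α : Type*} (mul : α → α → α) (Gens : Set α) (x y : α) : ℕ :=
  sInf {ℓ : ℕ | ∃ w : List α, (∀ g ∈ w, g ∈ Gens) ∧ w.length = ℓ ∧ w.foldl mul x = y}

/-- The word metric on a group associated with a generating set `S`. -/
def groupWordDist {G : Type*} [Group G] (S : Set G) (g h : G) : ℕ :=
  wordLen (· * ·) S g h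

/-- A group has exponential growth w.r.t. a generating set `S` if there is `c > 1`
such that the ball of radius `r` about the identity contains at least `c ^ r`
points for infinitely many positive integers `r`. -/
def HasExpGrowth {G : Type*} [Group G] (S : Set G) : Prop :=
  ∃ c : ℝ, 1 < c ∧ ∀ N : ℕ, ∃ r : ℕ, N ≤ r ∧ 0 < r ∧
    ∃ T : Finset G, (∀ g ∈ T, groupWordDist S 1 g ≤ r) ∧ (c : ℝ) ^ r ≤ (T.card : ℝ)

/-- The pinned travelling salesman metric associated with the distance function `ρ`
and basepoint `x0`, evaluated on two (finitely supported) functions `X → ZMod 2`. -/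
def TS {X : Type*} (ρ : X → X → ℝ) (x0 : X) (A B : X → ZMod 2) : ℝ :=
  if A = B then 0
  else 1 + sInf {L : ℝ | ∃ (ℓ : ℕ) (x : ℕ → X), 1 ≤ ℓ ∧ x 0 = x0 ∧ x ℓ = x0 ∧
    (∀ p : X, A p + B p ≠ 0 → ∃ i < ℓ, x i = p) ∧
    L = ∑ i ∈ Finset.range ℓ, ρ (x i) (x (i + 1))}

/-- The quotient of an addition-invariant distance function `d` by the subgroup `F`,
expressed on representatives: `quotDistBy d F x y = inf_{v ∈ F} d x (y + v)`. -/
def quotDistBy {E : Type*} [Add E] (d : E → E → ℝ) (F : Set E) (x y : E) : ℝ :=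
  sInf {r : ℝ | ∃ v ∈ F, r = d x (y + v)}

/-- The distortion of a map `f` between "metric" spaces `(Y, σ)` and `(Z, θ)`, where the
suprema defining it run over pairs satisfying the apartness relation `P`
(typically: `≠`, or "lying in distinct cosets"). -/
def distortionOn {Y Z : Type*} (σ : Y → Y → ℝ) (θ : Z → Z → ℝ)
    (P : Y → Y → Prop) (f : Y → Z) : ℝ :=
  sSup {r : ℝ | ∃ u v, P u v ∧ r = θ (f u) (f v) / σ u v} *
  sSup {r : ℝ | ∃ u v, P u v ∧ r = σ u v / θ (f u) (f v)}

/-- Multiplication of the (restricted) wreath-product-style semidirect product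
`M^{⊕H} ⋊ H`, where `H` has multiplication `hmul` and acts on `H →₀ M` by
coordinate right-translation:
`(a, h₁) · (b, h₂) = ((a (· h₂⁻¹)) + b, h₁ h₂)`. -/
def wrMul {H M : Type*} [AddCommMonoid M] (hmul : H → H → H) :
    ((H →₀ M) × H) → ((H →₀ M) × H) → ((H →₀ M) × H) :=
  fun x y => (Finsupp.mapDomain (fun h => hmul h y.2) x.1 + y.1, hmul x.2 y.2)

/-- The lifted generating set `{(±e_{e_G}, e_G)} ∪ {(0, s) : s ∈ S}` of `Z₆ ≀ G`. -/
def liftGens6 {G : Type*} [Group G] (S : Set G) : Set ((G →₀ ZMod 6) × G) :=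
  {p | p = (Finsupp.single (1 : G) (1 : ZMod 6), (1 : G)) ∨
       p = (Finsupp.single (1 : G) (-1 : ZMod 6), (1 : G)) ∨
       (p.1 = 0 ∧ p.2 ∈ S)}

/-- The lifted generating set `{(δ_{e_H}, e_H)} ∪ {(0, t) : t ∈ T}` of `Z₂^{⊕H} ⋊ H`
(and, after quotienting by an invariant subspace `V`, of `(Z₂^{⊕H}/V) ⋊ H`). -/
def liftGens2 {H : Type*} (eH : H) (T : Set H) : Set ((H →₀ ZMod 2) × H) :=
  {p | p = (Finsupp.single eH (1 : ZMod 2), eH) ∨ (p.1 = 0 ∧ p.2 ∈ T)}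

/-- The word metric of the quotient group `(Z₂^{⊕H}/V) ⋊ H` (`V` an `H`-invariant
subspace of `Z₂^{⊕H}`), expressed on representatives in `Z₂^{⊕H} × H`: the least
length of a word in `Gens` leading from `x` to some representative of the coset
of `y`. -/
def quotWordLen {H : Type*} (hmul : H → H → H) (V : Set (H →₀ ZMod 2))
    (Gens : Set ((H →₀ ZMod 2) × H)) (x y : (H →₀ ZMod 2) × H) : ℕ :=
  sInf {ℓ : ℕ | ∃ w : List ((H →₀ ZMod 2) × H), (∀ g ∈ w, g ∈ Gens) ∧ w.length = ℓ ∧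
    ∃ v ∈ V, w.foldl (wrMul hmul) x = (y.1 + v, y.2)}

/-- The word metric on `Z₆ = ZMod 6` for the generating set `{1, -1}`. -/
def z6dist (a b : ZMod 6) : ℕ := min (b - a).val (a - b).val

/-- The Hamming metric on `Z₆^I` built from the word metric on each factor. -/
def hamZ6 {I : Type*} [Fintype I] (u v : I → ZMod 6) : ℝ :=
  ∑ x, (z6dist (u x) (v x) : ℝ)

/-- The pinned travelling salesman metric on `Z₂^{Z₆^I}` over `(Z₆^I, d_Ham)`,
pinned at `0`. -/
def TSHam {I : Type*} [Fintype I] (A B : (I → ZMod 6) → ZMod 2) : ℝ :=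
  TS hamZ6 (0 : I → ZMod 6) A B

/-- Coordinatewise reduction `Z₆ → Z₂`. -/
def zbar (a : ZMod 6) : ZMod 2 := (a.val : ZMod 2)

/-- The `Z₂`-valued inner product on `Z₂^I`. -/
def ip2 {I : Type*} [Fintype I] (a b : I → ZMod 2) : ZMod 2 := ∑ x, a x * b x

/-- The annihilator of a set `C ⊆ Z₂^I`. -/
def perp2 {I : Type*} [Fintype I] (C : Set (I → ZMod 2)) : Set (I → ZMod 2) :=
  {a | ∀ c ∈ C, ip2 a c = 0}

/-- The `Z₂`-valued inner product on `Z₂^α` for a finite type `α`. -/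
def ipF {α : Type*} [Fintype α] (W V : α → ZMod 2) : ZMod 2 := ∑ w, W w * V w

/-- The linear functional `L_a : Z₆^I → Z₂`, `L_a(v) = ⟨v̄, a⟩`. -/
def La {I : Type*} [Fintype I] (a : I → ZMod 2) : (I → ZMod 6) → ZMod 2 :=
  fun v => ∑ x, zbar (v x) * a x

/-- The subspace `D = span({1} ∪ {L_a : a ∈ C}) ≤ Z₂^{Z₆^I}`. -/
def Dspan {I : Type*} [Fintype I] (C : Set (I → ZMod 2)) :
    Submodule (ZMod 2) ((I → ZMod 6) → ZMod 2) :=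
  Submodule.span (ZMod 2) ({fun _ => (1 : ZMod 2)} ∪ (La '' C))

/-- The annihilator `D^⊥` of `D = span({1} ∪ {L_a : a ∈ C})` inside `Z₂^{Z₆^I}`. -/
def DperpSet {I : Type*} [Fintype I] (C : Set (I → ZMod 2)) :
    Set ((I → ZMod 6) → ZMod 2) :=
  {W | ∀ D' ∈ Dspan C, ipF W D' = 0}

/-- The set `B = {e_x : x ∈ I}` of standard basis vectors in `Z₆^I`. -/
def Bset {I : Type*} [Fintype I] : Set (I → ZMod 6) :=
  Set.range (fun x : I => Pi.single x (1 : ZMod 6))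

/-- The embedding `ξ : Z₂^I → Z₂^{Z₆^I}`: `ξ(a)` is supported on `B` with
`ξ(a)(e_x) = a_x`. -/
def xi {I : Type*} [Fintype I] (a : I → ZMod 2) : (I → ZMod 6) → ZMod 2 :=
  fun w => ∑ x : I, if w = (Pi.single x (1 : ZMod 6) : I → ZMod 6) then a x else 0

/-- The map `R : Z₂^{Z₆^I} → Z₂^{Z₆^I}`: `R(W)` is supported on `B` with
`R(W)(e_x) = Σ_w W(w)·⟨ē_x, w̄⟩`. -/
def Rmap {I : Type*} [Fintype I] (W : (I → ZMod 6) → ZMod 2) :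
    (I → ZMod 6) → ZMod 2 :=
  fun w => ∑ x : I, if w = (Pi.single x (1 : ZMod 6) : I → ZMod 6) then (∑ v : I → ZMod 6, W v * zbar (v x)) else 0

/-- The indicator function `𝒜 : Z₆ → Z₂` of `{0, 1, 3, 4} ⊆ Z₆`. -/
def Acal : ZMod 6 → ZMod 2 := fun v => if v = 0 ∨ v = 1 ∨ v = 3 ∨ v = 4 then 1 else 0


/-- The map `Q_n` of the paper: given the excluded region `E` (which should equal
`I₁ ∪ ⋯ ∪ Iₙ ∪ {y₁, …, yₙ}`), the set `Iₙ = In`, the point `yₙ = yn`,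
a vector `u ∈ Z₆^{⊕(X∖E)}`, a function `W ∈ Z₂^{Z₆^{Iₙ}}` and `u' ∈ Z₆`,
`Qmap E In yn u W u'` is the element of `Z₂^{Z₆^{⊕X}}` given by
`w ↦ [w|_{X∖E} = u|_{X∖E}] ⬝ W(w|_{Iₙ}) ⬝ 𝒜(w_{yₙ} - u')`. -/
def Qmap {X : Type*} (E : Set X) (In : Finset X) (yn : X)
    (u : X →₀ ZMod 6) (W : ({x // x ∈ In} → ZMod 6) → ZMod 2) (u' : ZMod 6) :
    (X →₀ ZMod 6) → ZMod 2 :=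
  fun w => (if ∀ x ∉ E, w x = u x then 1 else 0) *
    W (fun x => w x.1) * Acal (w yn - u')

/-- The finite set `Eₙ = I₁ ∪ ⋯ ∪ Iₙ ∪ {y₁, …, yₙ}` (with indexing starting at `0`). -/
def EFin {G : Type*} (I : ℕ → Finset G) (y : ℕ → G) (n : ℕ) : Finset G :=
  ((Finset.range (n + 1)).biUnion I) ∪ (Finset.range (n + 1)).image y

/-- The function `Q̃ₙ(0, W, 0) ∈ Z₂^{⊕(Z₆ ≀ G)}`, realized as a finitely supported
function: it is supported on pairs `(w, e_G)` with `w` supported inside `E`, and its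
value there is `W(w|_{Iₙ}) ⬝ 𝒜(w_{yₙ})`.  (Here `E` should contain `Iₙ` and `yₙ`;
it will be `EFin I y n`.) -/
def QF {G : Type*} [Group G] (E : Finset G) (In : Finset G) (yn : G)
    (W : ({x // x ∈ In} → ZMod 6) → ZMod 2) : (((G →₀ ZMod 6) × G) →₀ ZMod 2) :=
  ∑ f : ({x // x ∈ E} → ZMod 6),
    Finsupp.single ((∑ x ∈ E.attach, Finsupp.single (x : G) (f x), (1 : G)))
      (W (fun x => if h : (x : G) ∈ E then f ⟨x, h⟩ else 0) *
        Acal (if h : yn ∈ E then f ⟨yn, h⟩ else 0))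

/-- Given a translation-invariant subspace `U ≤ Z₂^{⊕((Z₆ ≀ G)₀)}` (the zero section
being identified with `Z₆^{⊕G}`), the subspace
`V := {𝒱 ∈ Z₂^{⊕(Z₆ ≀ G)} : ∀ g₁, ((w_g)_g ↦ 𝒱((w_{g g₁⁻¹})_g, g₁)) ∈ U}`. -/
def Vext {G : Type*} [Group G] (U : Set ((G →₀ ZMod 6) →₀ ZMod 2)) :
    Set (((G →₀ ZMod 6) × G) →₀ ZMod 2) :=
  {V : ((G →₀ ZMod 6) × G) →₀ ZMod 2 | ∀ g₁ : G, ∃ u ∈ U,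
    ∀ w : G →₀ ZMod 6, u w = V (Finsupp.mapDomain (· * g₁) w, g₁)}

/-- Extension by zero of a function on the zero section `(Z₆ ≀ G)₀ ≅ Z₆^{⊕G}`
to all of `Z₆ ≀ G`. -/
def extZero {G : Type*} [Group G] (A : (G →₀ ZMod 6) →₀ ZMod 2) :
    ((G →₀ ZMod 6) × G) →₀ ZMod 2 :=
  Finsupp.mapDomain (fun w => (w, (1 : G))) A

end

/-- If an infinite, locally finite, `1`-discrete metric space `X`
contains uniformly bi-Lipschitzly embedded finite `1`-discrete metric spaces `Y_n` of
growing diameter, whose expansion ratios `r_n` grow slower than any positive power of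
`diam Y_n`, and whose distortions into the normed space `𝔛` are at least
`c ⬝ (diam Y_n)^η`, then `X` admits no `1`-Lipschitz embedding into `𝔛` with compression
exponent `α > 1 - η`; i.e. `α*_𝔛(X) ≤ 1 - η`. -/
theorem compression_bound_from_distortion
    {𝔛 : Type*} [NormedAddCommGroup 𝔛] [NormedSpace ℝ 𝔛]
    {X : Type*} [MetricSpace X] (hinf : Infinite X)
    (hlocfin : ∀ (x : X) (R : ℝ), (Metric.ball x R).Finite)
    (hdisc : ∀ x y : X, x ≠ y → 1 ≤ dist x y)
    (Y : ℕ → Type*) (mY : ∀ n, MetricSpace (Y n)) (fY : ∀ n, Fintype (Y n))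
    (hYdisc : ∀ (n) (u v : Y n), u ≠ v → 1 ≤ dist u v)
    (hdiam : Tendsto (fun n => Metric.diam (Set.univ : Set (Y n))) atTop atTop)
    (φ : ∀ n, Y n → X) (hφinj : ∀ n, Function.Injective (φ n))
    (L : ℝ) (hL : 1 ≤ L) (r : ℕ → ℝ) (hr : ∀ n, 1 ≤ r n)
    (hbiLip : ∀ (n) (u v : Y n),
      (1 / L) * r n * dist u v ≤ dist (φ n u) (φ n v) ∧
      dist (φ n u) (φ n v) ≤ L * r n * dist u v)
    (hslow : ∀ ε : ℝ, 0 < ε → ∃ Cε : ℝ, 0 < Cε ∧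
      ∀ n, r n ≤ Cε * Metric.diam (Set.univ : Set (Y n)) ^ ε)
    (η : ℝ) (hη0 : 0 < η) (hη1 : η ≤ 1) (c : ℝ) (hc : 0 < c)
    (hdistort : ∀ (n) (f : Y n → 𝔛), Function.Injective f →
      c * Metric.diam (Set.univ : Set (Y n)) ^ η ≤
        distortionOn (fun u v : Y n => dist u v) (fun a b : 𝔛 => ‖a - b‖)
          (fun u v : Y n => u ≠ v) f)
    (α : ℝ) (hα : 1 - η < α) (K : ℝ) (hK : 0 < K) :
    ¬ ∃ f : X → 𝔛, ∀ x y : X,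
        K * dist x y ^ α ≤ ‖f x - f y‖ ∧ ‖f x - f y‖ ≤ dist x y := by
  rintro ⟨f, hf⟩
  have hα0 : 0 < α := by linarith
  set β : ℝ := max (1 - α) 0 with hβdef
  have hβ0 : 0 ≤ β := le_max_right _ _
  have hβη : β < η := max_lt (by linarith) hη0
  set ε : ℝ := (η - β) / (η + 1) with hεdef
  have hε0 : 0 < ε := div_pos (by linarith) (by linarith)
  have hεeq : ε * (η + 1) = η - β := div_mul_cancel₀ _ (by linarith)
  obtain ⟨Cε, hCε0, hCεle⟩ := hslow ε hε0
  set γ : ℝ := β * (1 + ε) with hγdef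
  have hγη : γ < η := by
    nlinarith [mul_pos (sub_pos.mpr hβη) hε0,
      mul_le_mul_of_nonneg_right hβη.le hε0.le]
  have hL0 : 0 < L := lt_of_lt_of_le one_pos hL
  set M : ℝ := L * L ^ α * Cε ^ β / K with hMdef
  have hM0 : 0 < M := by positivity
  set D : ℝ := max 1 ((M / c + 1) ^ (1 / (η - γ))) with hDdef
  obtain ⟨n, hn⟩ := (hdiam.eventually_ge_atTop D).exists
  set dn : ℝ := Metric.diam (Set.univ : Set (Y n)) with hdndef
  have hdn1 : 1 ≤ dn := le_trans (le_max_left _ _) hn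
  have hdn0 : 0 < dn := lt_of_lt_of_le one_pos hdn1
  have hrn1 : 1 ≤ r n := hr n
  have hrn0 : 0 < r n := lt_of_lt_of_le one_pos hrn1
  -- Y n has two distinct points
  obtain ⟨u₀, v₀, huv₀⟩ : ∃ u v : Y n, u ≠ v := by
    by_contra h
    push_neg at h
    have hs : (Set.univ : Set (Y n)).Subsingleton := fun a _ b _ => h a b
    have h0 := Metric.diam_subsingleton hs
    rw [← hdndef] at h0
    linarith
  -- injectivity
  have hginj : Function.Injective (f ∘ φ n) := by
    intro a b hab
    by_contra hne
    have hne' : φ n a ≠ φ n b := fun h => hne (hφinj n h)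
    have hd1 : 1 ≤ dist (φ n a) (φ n b) := hdisc _ _ hne'
    have hd0 : (0:ℝ) < dist (φ n a) (φ n b) := by linarith
    have h1 := (hf (φ n a) (φ n b)).1
    have h0 : f (φ n a) = f (φ n b) := hab
    rw [h0, sub_self, norm_zero] at h1
    have : (0:ℝ) < K * dist (φ n a) (φ n b) ^ α := by positivity
    linarith
  -- lower bound on image distances
  have hθlb : ∀ u v : Y n, u ≠ v →
      K * (r n * dist u v / L) ^ α ≤ ‖f (φ n u) - f (φ n v)‖ := by
    intro u v huv
    have h1 := (hf (φ n u) (φ n v)).1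
    have h2 := (hbiLip n u v).1
    have hd1 : 1 ≤ dist u v := hYdisc n u v huv
    have hle : r n * dist u v / L ≤ dist (φ n u) (φ n v) := by
      calc r n * dist u v / L = 1 / L * r n * dist u v := by ring
        _ ≤ _ := h2
    calc K * (r n * dist u v / L) ^ α
        ≤ K * dist (φ n u) (φ n v) ^ α := by
          refine mul_le_mul_of_nonneg_left ?_ hK.le
          exact Real.rpow_le_rpow (by positivity) hle hα0.le
      _ ≤ ‖f (φ n u) - f (φ n v)‖ := h1
  -- bounds for the two suprema
  have hbound1 : ∀ u v : Y n, u ≠ v →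
      ‖f (φ n u) - f (φ n v)‖ / dist u v ≤ L * r n := by
    intro u v huv
    have hd1 : 1 ≤ dist u v := hYdisc n u v huv
    have hd0 : (0:ℝ) < dist u v := by linarith
    rw [div_le_iff₀ hd0]
    calc ‖f (φ n u) - f (φ n v)‖ ≤ dist (φ n u) (φ n v) := (hf _ _).2
      _ ≤ L * r n * dist u v := (hbiLip n u v).2
  have hbound2 : ∀ u v : Y n, u ≠ v →
      dist u v / ‖f (φ n u) - f (φ n v)‖ ≤ L ^ α / (K * r n ^ α) * dn ^ β := by
    intro u v huv
    have hd1 : 1 ≤ dist u v := hYdisc n u v huv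
    have hd0 : (0:ℝ) < dist u v := by linarith
    have hθ := hθlb u v huv
    have hθ0 : 0 < ‖f (φ n u) - f (φ n v)‖ := lt_of_lt_of_le (by positivity) hθ
    have hddn : dist u v ≤ dn := by
      rw [hdndef]
      exact Metric.dist_le_diam_of_mem
        ((Set.finite_univ).isBounded) (Set.mem_univ u) (Set.mem_univ v)
    have hexp : (r n * dist u v / L) ^ α = r n ^ α * dist u v ^ α / L ^ α := by
      rw [Real.div_rpow (by positivity) hL0.le, Real.mul_rpow hrn0.le hd0.le]
    have hkey : dist u v ≤ dn ^ β * dist u v ^ α := by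
      have h1 : dist u v ^ (1 - α) ≤ dn ^ β :=
        calc dist u v ^ (1 - α) ≤ dist u v ^ β :=
              Real.rpow_le_rpow_of_exponent_le hd1 (by rw [hβdef]; exact le_max_left _ _)
          _ ≤ dn ^ β := Real.rpow_le_rpow hd0.le hddn hβ0
      calc dist u v = dist u v ^ (1 - α) * dist u v ^ α := by
            rw [← Real.rpow_add hd0]; norm_num
        _ ≤ dn ^ β * dist u v ^ α :=
            mul_le_mul_of_nonneg_right h1 (by positivity)
    have hKne : K ≠ 0 := hK.ne'
    have hrnα : r n ^ α ≠ 0 := (Real.rpow_pos_of_pos hrn0 α).ne'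
    have hLα : L ^ α ≠ 0 := (Real.rpow_pos_of_pos hL0 α).ne'
    have e2 : L ^ α / (K * r n ^ α) * dn ^ β * (K * (r n * dist u v / L) ^ α)
        = dn ^ β * dist u v ^ α := by
      rw [hexp]; field_simp
    rw [div_le_iff₀ hθ0]
    calc dist u v ≤ dn ^ β * dist u v ^ α := hkey
      _ = L ^ α / (K * r n ^ α) * dn ^ β * (K * (r n * dist u v / L) ^ α) := e2.symm
      _ ≤ L ^ α / (K * r n ^ α) * dn ^ β * ‖f (φ n u) - f (φ n v)‖ :=
          mul_le_mul_of_nonneg_left hθ (by positivity)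
  -- the distortion lower bound
  have hprod := hdistort n (f ∘ φ n) hginj
  rw [distortionOn] at hprod
  simp only [Function.comp_apply] at hprod
  rw [← hdndef] at hprod
  have hS1 : sSup {r' : ℝ | ∃ u v : Y n, u ≠ v ∧
      r' = ‖f (φ n u) - f (φ n v)‖ / dist u v} ≤ L * r n := by
    refine csSup_le ⟨_, ⟨u₀, v₀, huv₀, rfl⟩⟩ ?_
    rintro x ⟨u, v, huv, rfl⟩
    exact hbound1 u v huv
  have hS2 : sSup {r' : ℝ | ∃ u v : Y n, u ≠ v ∧
      r' = dist u v / ‖f (φ n u) - f (φ n v)‖} ≤ L ^ α / (K * r n ^ α) * dn ^ β := by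
    refine csSup_le ⟨_, ⟨u₀, v₀, huv₀, rfl⟩⟩ ?_
    rintro x ⟨u, v, huv, rfl⟩
    exact hbound2 u v huv
  have hS2nn : 0 ≤ sSup {r' : ℝ | ∃ u v : Y n, u ≠ v ∧
      r' = dist u v / ‖f (φ n u) - f (φ n v)‖} := by
    apply Real.sSup_nonneg
    rintro x ⟨u, v, huv, rfl⟩
    have hd1 : 1 ≤ dist u v := hYdisc n u v huv
    positivity
  have hchain : c * dn ^ η ≤ (L * r n) * (L ^ α / (K * r n ^ α) * dn ^ β) := by
    refine le_trans hprod ?_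
    exact mul_le_mul hS1 hS2 hS2nn (by positivity)
  -- upper bound the right-hand side by M * dn ^ γ
  have hRHS : (L * r n) * (L ^ α / (K * r n ^ α) * dn ^ β) ≤ M * dn ^ γ := by
    have e1 : (L * r n) * (L ^ α / (K * r n ^ α) * dn ^ β)
        = (L * L ^ α / K) * (r n ^ (1:ℝ) / r n ^ α * dn ^ β) := by
      rw [Real.rpow_one]; ring
    rw [e1, ← Real.rpow_sub hrn0]
    have h2 : r n ^ (1 - α) ≤ Cε ^ β * dn ^ (ε * β) := by
      calc r n ^ (1 - α) ≤ r n ^ β :=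
            Real.rpow_le_rpow_of_exponent_le hrn1 (by rw [hβdef]; exact le_max_left _ _)
        _ ≤ (Cε * dn ^ ε) ^ β := by
            refine Real.rpow_le_rpow hrn0.le ?_ hβ0
            rw [hdndef]; exact hCεle n
        _ = Cε ^ β * dn ^ (ε * β) := by
            rw [Real.mul_rpow hCε0.le (by positivity), ← Real.rpow_mul hdn0.le]
    calc (L * L ^ α / K) * (r n ^ (1 - α) * dn ^ β)
        ≤ (L * L ^ α / K) * (Cε ^ β * dn ^ (ε * β) * dn ^ β) := by
          refine mul_le_mul_of_nonneg_left ?_ (by positivity)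
          exact mul_le_mul_of_nonneg_right h2 (by positivity)
      _ = M * dn ^ γ := by
          rw [hMdef, hγdef, mul_assoc, ← Real.rpow_add hdn0,
            show ε * β + β = β * (1 + ε) from by ring]
          ring
  have hfinal : c * dn ^ η ≤ M * dn ^ γ := le_trans hchain hRHS
  -- derive the contradiction
  have hγη' : (0:ℝ) < η - γ := by linarith
  have hdng0 : 0 < dn ^ γ := Real.rpow_pos_of_pos hdn0 γ
  have hsplit : dn ^ η = dn ^ (η - γ) * dn ^ γ := by
    rw [← Real.rpow_add hdn0, sub_add_cancel]
  have hD2 : (M / c + 1) ^ (1 / (η - γ)) ≤ dn := by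
    refine le_trans ?_ hn
    rw [hDdef]; exact le_max_right _ _
  have hMc : M / c + 1 ≤ dn ^ (η - γ) := by
    calc M / c + 1 = ((M / c + 1) ^ (1 / (η - γ))) ^ (η - γ) := by
          rw [← Real.rpow_mul (by positivity), one_div,
            inv_mul_cancel₀ hγη'.ne', Real.rpow_one]
      _ ≤ dn ^ (η - γ) := Real.rpow_le_rpow (by positivity) hD2 hγη'.le
  rw [hsplit] at hfinal
  have h9 : (M + c) * dn ^ γ ≤ M * dn ^ γ := by
    calc (M + c) * dn ^ γ = c * (M / c + 1) * dn ^ γ := by field_simp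
      _ ≤ c * dn ^ (η - γ) * dn ^ γ := by
          refine mul_le_mul_of_nonneg_right ?_ hdng0.le
          exact mul_le_mul_of_nonneg_left hMc hc.le
      _ = c * (dn ^ (η - γ) * dn ^ γ) := by ring
      _ ≤ M * dn ^ γ := hfinal
  nlinarith [mul_pos hc hdng0]
end

section
/- Let G be a finitely generated group of exponential growth with finite symmetric generating set S and word metric ρ_S. Then there is an integer M ≥ 1 (depending only on G and S) such that for every r₀ > 0 there exist an integer r ≥ r₀ and pairwise distinct elements x₁, x₂, …, x_d ∈ G with d := 10^r such that r ≤ ρ_S(x_i,x_j) ≤ 2Mr for all 1 ≤ i < j ≤ d, and r ≤ ρ_S(x_i, e_G) ≤ 2Mr for all 1 ≤ i ≤ d. -/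
open scoped BigOperators
open scoped Classical
open MeasureTheory Filter
open scoped ENNReal NNReal

/-!
A maximal `r`-separated subset `P ∋ 1` of a finite set `T ∋ 1` covers `T` by balls of
radius `r`, each holding at most `(|S| + 1) ^ r` elements, so `|T| ≤ |P| (|S| + 1) ^ r`.
Exponential growth provides, at scales `r` tending to infinity, sets `T` inside the ball of radius
`M r` with `|T| ≥ (20 (|S| + 1)) ^ r`; then `|P| ≥ 20 ^ r > 10 ^ r`, and any `10 ^ r` points of
`P ∖ {1}` are at mutual distance and at distance from `1` between `r` and `2 M r`.
-/

open scoped Pointwise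

theorem Finset.exists_maximal_pairwise_subset {α : Type*} [DecidableEq α] (R : α → α → Prop)
    (hR : ∀ a b, R a b → R b a) {T : Finset α} {a : α} (ha : a ∈ T) :
    ∃ P ⊆ T, a ∈ P ∧ (P : Set α).Pairwise R ∧ ∀ t ∈ T, t ∉ P → ∃ p ∈ P, ¬R p t := by
  have hne : (T.powerset.filter fun P : Finset α => a ∈ P ∧ (P : Set α).Pairwise R).Nonempty :=
    ⟨{a}, by simp [ha]⟩
  obtain ⟨P, hP, hmax⟩ := Finset.exists_max_image _ Finset.card hne
  simp only [Finset.mem_filter, Finset.mem_powerset] at hP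
  obtain ⟨hPT, haP, hPR⟩ := hP
  refine ⟨P, hPT, haP, hPR, fun t ht htP => ?_⟩
  by_contra! hfar
  have hins : (insert t (P : Set α)).Pairwise R :=
    hPR.insert fun p hp _ => ⟨hR p t (hfar p hp), hfar p hp⟩
  have := hmax (insert t P) (by simp [Finset.insert_subset ht hPT, haP, hins])
  rw [Finset.card_insert_of_notMem htP] at this
  omega

theorem Finset.list_prod_mem_pow_length {M : Type*} [Monoid M] [DecidableEq M] {s : Finset M} :
    ∀ {w : List M}, (∀ a ∈ w, a ∈ s) → w.prod ∈ s ^ w.length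
  | [], _ => by simp
  | a :: w, hw => by
    rw [List.prod_cons, List.length_cons, pow_succ']
    exact Finset.mul_mem_mul (hw a List.mem_cons_self)
      (list_prod_mem_pow_length fun b hb => hw b (List.mem_cons_of_mem a hb))

section WordMetric

variable {G : Type*} [Group G] {S : Finset G}

theorem List.foldl_mul_eq_mul_prod (g : G) (w : List G) : w.foldl (· * ·) g = g * w.prod := by
  induction w generalizing g with
  | nil => simp
  | cons a w ih => simp [ih, mul_assoc]

theorem groupWordDist_le_length {x y : G} {w : List G} (hw : ∀ a ∈ w, a ∈ S)
    (hxy : x * w.prod = y) : groupWordDist (S : Set G) x y ≤ w.length :=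
  Nat.sInf_le ⟨w, hw, rfl, by rw [List.foldl_mul_eq_mul_prod, hxy]⟩

theorem groupWordDist_self (x : G) : groupWordDist (S : Set G) x x = 0 :=
  Nat.le_zero.1 (groupWordDist_le_length (w := []) (by simp) (by simp))

theorem exists_list_prod_eq (hsymm : ∀ s ∈ S, s⁻¹ ∈ S)
    (hgen : Subgroup.closure (S : Set G) = ⊤) (g : G) :
    ∃ w : List G, (∀ a ∈ w, a ∈ S) ∧ w.prod = g := by
  have hmem : g ∈ Submonoid.closure ((S : Set G) ∪ (S : Set G)⁻¹) := by
    rw [← Subgroup.closure_toSubmonoid, hgen]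
    trivial
  have hinv : (S : Set G)⁻¹ ⊆ S := fun s hs => by simpa using hsymm _ hs
  rw [Set.union_eq_self_of_subset_right hinv] at hmem
  exact Submonoid.exists_list_of_mem_closure hmem

variable (hsymm : ∀ s ∈ S, s⁻¹ ∈ S) (hgen : Subgroup.closure (S : Set G) = ⊤)
include hsymm hgen

theorem exists_list_length_eq_groupWordDist (x y : G) :
    ∃ w : List G, (∀ a ∈ w, a ∈ S) ∧ w.length = groupWordDist (S : Set G) x y ∧
      x * w.prod = y := by
  obtain ⟨w, hwS, hw⟩ := exists_list_prod_eq hsymm hgen (x⁻¹ * y)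
  obtain ⟨v, hvS, hv, hxy⟩ := Nat.sInf_mem (s := {ℓ : ℕ | ∃ w : List G, (∀ g ∈ w, g ∈ S) ∧
    w.length = ℓ ∧ w.foldl (· * ·) x = y}) ⟨w.length, w, hwS, rfl, by
      rw [List.foldl_mul_eq_mul_prod, hw, mul_inv_cancel_left]⟩
  exact ⟨v, hvS, hv, by rwa [← List.foldl_mul_eq_mul_prod]⟩

theorem groupWordDist_comm (x y : G) :
    groupWordDist (S : Set G) x y = groupWordDist (S : Set G) y x := by
  suffices h : ∀ a b : G, groupWordDist (S : Set G) b a ≤ groupWordDist (S : Set G) a b from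
    le_antisymm (h y x) (h x y)
  intro a b
  obtain ⟨w, hwS, hw, hab⟩ := exists_list_length_eq_groupWordDist hsymm hgen a b
  calc groupWordDist (S : Set G) b a ≤ (w.map (·⁻¹)).reverse.length :=
        groupWordDist_le_length (fun s hs => by simpa using hsymm s⁻¹ (hwS s⁻¹ (by simpa using hs)))
          (by rw [← List.prod_inv_reverse, ← hab, mul_inv_cancel_right])
    _ = groupWordDist (S : Set G) a b := by simp [hw]

theorem groupWordDist_triangle (x y z : G) :
    groupWordDist (S : Set G) x z ≤
      groupWordDist (S : Set G) x y + groupWordDist (S : Set G) y z := by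
  obtain ⟨u, huS, hu, hxy⟩ := exists_list_length_eq_groupWordDist hsymm hgen x y
  obtain ⟨v, hvS, hv, hyz⟩ := exists_list_length_eq_groupWordDist hsymm hgen y z
  calc groupWordDist (S : Set G) x z ≤ (u ++ v).length :=
        groupWordDist_le_length (fun s hs => (List.mem_append.1 hs).elim (huS s) (hvS s))
          (by rw [List.prod_append, ← mul_assoc, hxy, hyz])
    _ = _ := by simp [hu, hv]

theorem inv_mul_mem_pow_of_groupWordDist_le {x y : G} {n : ℕ}
    (h : groupWordDist (S : Set G) x y ≤ n) : x⁻¹ * y ∈ (insert 1 S) ^ n := by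
  obtain ⟨w, hwS, hw, rfl⟩ := exists_list_length_eq_groupWordDist hsymm hgen x y
  rw [inv_mul_cancel_left]
  refine Finset.pow_subset_pow_right (Finset.mem_insert_self 1 S) h ?_
  rw [← hw]
  exact Finset.list_prod_mem_pow_length fun a ha => Finset.mem_insert_of_mem (hwS a ha)

theorem card_le_of_forall_groupWordDist_le (x : G) {F : Finset G} {n : ℕ}
    (hF : ∀ y ∈ F, groupWordDist (S : Set G) x y ≤ n) : F.card ≤ (S.card + 1) ^ n :=
  calc F.card ≤ ((insert 1 S) ^ n).card :=
        Finset.card_le_card_of_injOn (x⁻¹ * ·)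
          (fun y hy => inv_mul_mem_pow_of_groupWordDist_le hsymm hgen (hF y hy))
          (mul_right_injective x⁻¹).injOn
    _ ≤ (insert 1 S).card ^ n := Finset.card_pow_le
    _ ≤ (S.card + 1) ^ n := Nat.pow_le_pow_left (Finset.card_insert_le 1 S) n

theorem exists_separated_subset_card_le (r : ℕ) {T : Finset G} (hT : 1 ∈ T) :
    ∃ P ⊆ T, 1 ∈ P ∧ (P : Set G).Pairwise (fun x y => r ≤ groupWordDist (S : Set G) x y) ∧
      T.card ≤ P.card * (S.card + 1) ^ r := by
  obtain ⟨P, hPT, hP1, hsep, hmax⟩ := Finset.exists_maximal_pairwise_subset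
    (fun x y => r ≤ groupWordDist (S : Set G) x y)
    (fun x y h => groupWordDist_comm hsymm hgen x y ▸ h) hT
  refine ⟨P, hPT, hP1, hsep, ?_⟩
  have hcover : T ⊆ P.biUnion fun p => T.filter fun t => groupWordDist (S : Set G) p t ≤ r := by
    intro t ht
    by_cases htP : t ∈ P
    · exact Finset.mem_biUnion.2 ⟨t, htP, Finset.mem_filter.2 ⟨ht, by simp [groupWordDist_self]⟩⟩
    · obtain ⟨p, hp, hpt⟩ := hmax t ht htP
      exact Finset.mem_biUnion.2 ⟨p, hp, Finset.mem_filter.2 ⟨ht, (not_le.1 hpt).le⟩⟩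
  calc T.card ≤ _ := Finset.card_le_card hcover
    _ ≤ P.card * (S.card + 1) ^ r := Finset.card_biUnion_le_card_mul _ _ _ fun p _ =>
        card_le_of_forall_groupWordDist_le hsymm hgen p fun t ht => (Finset.mem_filter.1 ht).2

theorem exists_injective_fin_separated {P : Finset G} {r R n : ℕ} (hP1 : 1 ∈ P)
    (hsep : (P : Set G).Pairwise (fun x y => r ≤ groupWordDist (S : Set G) x y))
    (hball : ∀ g ∈ P, groupWordDist (S : Set G) 1 g ≤ R) (hcard : n < P.card) :
    ∃ x : Fin n → G, Function.Injective x ∧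
      (∀ i j, i ≠ j → r ≤ groupWordDist (S : Set G) (x i) (x j) ∧
        groupWordDist (S : Set G) (x i) (x j) ≤ 2 * R) ∧
      ∀ i, r ≤ groupWordDist (S : Set G) (x i) 1 ∧ groupWordDist (S : Set G) (x i) 1 ≤ R := by
  obtain ⟨f⟩ : Nonempty (Fin n ↪ P.erase 1) := Function.Embedding.nonempty_of_card_le <| by
    simp only [Fintype.card_fin, Fintype.card_coe, Finset.card_erase_of_mem hP1]
    omega
  have hfP (i : Fin n) : (f i : G) ∈ P := Finset.mem_of_mem_erase (f i).2
  have hf1 (i : Fin n) : (f i : G) ≠ 1 := Finset.ne_of_mem_erase (f i).2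
  have hfR (i : Fin n) : groupWordDist (S : Set G) (f i) 1 ≤ R :=
    groupWordDist_comm hsymm hgen (f i : G) 1 ▸ hball _ (hfP i)
  refine ⟨fun i => f i, Subtype.val_injective.comp f.injective, fun i j hij => ⟨?_, ?_⟩,
    fun i => ⟨hsep (hfP i) hP1 (hf1 i), hfR i⟩⟩
  · exact hsep (hfP i) (hfP j) fun h => hij (f.injective (Subtype.val_injective h))
  · calc groupWordDist (S : Set G) (f i) (f j)
        ≤ groupWordDist (S : Set G) (f i) 1 + groupWordDist (S : Set G) 1 (f j) :=
          groupWordDist_triangle hsymm hgen _ _ _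
      _ ≤ 2 * R := by linarith [hfR i, hball _ (hfP j)]

end WordMetric

theorem HasExpGrowth.exists_large_set_in_ball {G : Type*} [Group G] {S : Set G}
    (hexp : HasExpGrowth S) (K : ℕ) :
    ∃ M : ℕ, 1 ≤ M ∧ ∀ N : ℕ, ∃ r : ℕ, N ≤ r ∧ ∃ T : Finset G,
      (∀ g ∈ T, groupWordDist S 1 g ≤ M * r) ∧ K ^ r ≤ T.card := by
  obtain ⟨c, hc, hgrow⟩ := hexp
  set K' := max K 1
  obtain ⟨m, hm⟩ := pow_unbounded_of_one_lt ((K' : ℝ) ^ 2) hc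
  refine ⟨max m 1, le_max_right m 1, fun N => ?_⟩
  set M := max m 1
  have hM : 0 < M := le_max_right m 1
  obtain ⟨R, hRN, -, T, hT, hTcard⟩ := hgrow (M * (N + 2))
  have hRM : N + 2 ≤ R / M := (Nat.le_div_iff_mul_le hM).2 (by linarith [mul_comm M (N + 2)])
  -- Round the scale `R` up to a multiple `M r` of `M`; then `c ^ R ≥ c ^ (M (r - 1)) ≥ K ^ r`.
  set r := R / M + 1
  refine ⟨r, by omega, T, fun g hg => (hT g hg).trans (Nat.lt_mul_div_succ R hM).le, ?_⟩
  have hKr : K ^ r ≤ (K' ^ 2) ^ (r - 1) := by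
    rw [← pow_mul]
    exact (Nat.pow_le_pow_left (le_max_left K 1) r).trans
      (Nat.pow_le_pow_right (le_max_right K 1) (by omega))
  have hcR : ((K' : ℝ) ^ 2) ^ (r - 1) ≤ c ^ R :=
    calc ((K' : ℝ) ^ 2) ^ (r - 1) ≤ (c ^ M) ^ (r - 1) :=
          pow_le_pow_left₀ (by positivity)
            (hm.le.trans (pow_le_pow_right₀ hc.le (le_max_left m 1))) _
      _ = c ^ (M * (R / M)) := by rw [← pow_mul]; rfl
      _ ≤ c ^ R := pow_le_pow_right₀ hc.le (Nat.mul_div_le R M)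
  have hKr' : ((K ^ r : ℕ) : ℝ) ≤ T.card :=
    (Nat.cast_le.2 hKr).trans (by push_cast; exact hcR.trans hTcard)
  exact_mod_cast hKr'

/-- In a finitely generated group of exponential growth there are, at
arbitrarily large scales `r`, sets of `d = 10^r` points that are pairwise roughly
equidistant: all pairwise distances, and all distances to the identity, lie in `[r, 2Mr]`,
where `M ≥ 1` depends only on `G` and `S`. -/
theorem equidistant_points_in_exp_growth_group {G : Type*} [Group G] (S : Finset G)
    (hsymm : ∀ s ∈ S, s⁻¹ ∈ S) (hgen : Subgroup.closure (S : Set G) = ⊤)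
    (hexp : HasExpGrowth (S : Set G)) :
    ∃ M : ℕ, 1 ≤ M ∧
      ∀ r₀ : ℝ, 0 < r₀ → ∃ r : ℕ, r₀ ≤ (r : ℝ) ∧
        ∃ x : Fin (10 ^ r) → G, Function.Injective x ∧
          (∀ i j : Fin (10 ^ r), i ≠ j →
            r ≤ groupWordDist (S : Set G) (x i) (x j) ∧
            groupWordDist (S : Set G) (x i) (x j) ≤ 2 * M * r) ∧
          (∀ i : Fin (10 ^ r),
            r ≤ groupWordDist (S : Set G) (x i) 1 ∧
            groupWordDist (S : Set G) (x i) 1 ≤ 2 * M * r) := by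
  obtain ⟨M, hM, hscale⟩ := hexp.exists_large_set_in_ball (20 * (S.card + 1))
  refine ⟨M, hM, fun r₀ _ => ?_⟩
  obtain ⟨r, hr, T, hT, hTcard⟩ := hscale (max ⌈r₀⌉₊ 1)
  obtain ⟨P, hPT, hP1, hsep, hTP⟩ :=
    exists_separated_subset_card_le hsymm hgen r (Finset.mem_insert_self 1 T)
  have hPcard : 10 ^ r < P.card := by
    have h20 : 20 ^ r * (S.card + 1) ^ r ≤ P.card * (S.card + 1) ^ r := by
      rw [← mul_pow]
      exact hTcard.trans ((Finset.card_le_card (Finset.subset_insert 1 T)).trans hTP)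
    exact (Nat.pow_lt_pow_left (by norm_num) (by omega)).trans_le
      (Nat.le_of_mul_le_mul_right h20 (by positivity))
  have hball : ∀ g ∈ insert 1 T, groupWordDist (S : Set G) 1 g ≤ M * r := by
    simpa [groupWordDist_self] using hT
  obtain ⟨x, hinj, hpair, hone⟩ :=
    exists_injective_fin_separated hsymm hgen hP1 hsep (fun g hg => hball g (hPT hg)) hPcard
  refine ⟨r, (Nat.le_ceil r₀).trans (by exact_mod_cast (le_max_left _ 1).trans hr), x, hinj,
    fun i j hij => ?_, fun i => ⟨(hone i).1, (hone i).2.trans ?_⟩⟩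
  · simpa [mul_assoc] using hpair i j hij
  · rw [mul_assoc]
    exact Nat.le_mul_of_pos_left _ two_pos
end

section
/- For every metric space (X,ρ) and every x° ∈ X, the pinned traveling salesman function TS_{ρ,x°} is a metric on the group Z₂^{⊕X} of finitely supported functions X → Z₂: it is nonnegative, TS_{ρ,x°}(A,B) = 0 if and only if A = B, it is symmetric, and it satisfies the triangle inequality TS_{ρ,x°}(A,C) ≤ TS_{ρ,x°}(A,B) + TS_{ρ,x°}(B,C). -/
open scoped BigOperators
open scoped Classical
open MeasureTheory Filter
open scoped ENNReal NNReal

noncomputable section TSmetricHelpers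

variable {X : Type*} [MetricSpace X] (x0 : X)

/-- The set of tour lengths appearing in the definition of `TS`. -/
def TSset (ρ : X → X → ℝ) (x0 : X) (A B : X → ZMod 2) : Set ℝ :=
  {L : ℝ | ∃ (ℓ : ℕ) (x : ℕ → X), 1 ≤ ℓ ∧ x 0 = x0 ∧ x ℓ = x0 ∧
    (∀ p : X, A p + B p ≠ 0 → ∃ i < ℓ, x i = p) ∧
    L = ∑ i ∈ Finset.range ℓ, ρ (x i) (x (i + 1))}

lemma TS_eq_TSset (ρ : X → X → ℝ) (A B : X → ZMod 2) :
    TS ρ x0 A B = if A = B then 0 else 1 + sInf (TSset ρ x0 A B) := rfl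

lemma TSset_nonneg (A B : X → ZMod 2) : ∀ L ∈ TSset dist x0 A B, (0 : ℝ) ≤ L := by
  rintro L ⟨ℓ, x, -, -, -, -, rfl⟩
  exact Finset.sum_nonneg fun i _ => dist_nonneg

lemma TSset_comm (A B : X → ZMod 2) : TSset dist x0 A B = TSset dist x0 B A := by
  have h : ∀ C D : X → ZMod 2, TSset dist x0 C D ⊆ TSset dist x0 D C := by
    rintro C D L ⟨ℓ, x, h1, h2, h3, h4, h5⟩
    exact ⟨ℓ, x, h1, h2, h3, fun p hp => h4 p (by rwa [add_comm]), h5⟩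
  exact le_antisymm (h A B) (h B A)

lemma TSset_nonempty (A B : X →₀ ZMod 2) : (TSset dist x0 ⇑A ⇑B).Nonempty := by
  classical
  set l := (A + B).support.toList with hl
  refine ⟨_, l.length + 1, (fun i => if i = 0 then x0 else l.getD (i - 1) x0),
    ?_, ?_, ?_, ?_, rfl⟩
  · omega
  · simp
  · have : l.length + 1 ≠ 0 := by omega
    simp only [this, if_false]
    exact List.getD_eq_default _ _ (by omega)
  · intro p hp
    have hpl : p ∈ l := by
      rw [hl, Finset.mem_toList, Finsupp.mem_support_iff, Finsupp.add_apply]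
      exact hp
    obtain ⟨j, hj, hget⟩ := List.mem_iff_getElem.mp hpl
    refine ⟨j + 1, by omega, ?_⟩
    have : j + 1 ≠ 0 := by omega
    simp only [this, if_false, Nat.add_sub_cancel]
    rw [List.getD_eq_getElem _ _ hj]
    exact hget

lemma TSset_concat (A B C : X → ZMod 2) {L1 L2 : ℝ}
    (h1 : L1 ∈ TSset dist x0 A B) (h2 : L2 ∈ TSset dist x0 B C) :
    L1 + L2 ∈ TSset dist x0 A C := by
  obtain ⟨ℓ1, x, hℓ1, hx0, hxℓ, hcov1, rfl⟩ := h1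
  obtain ⟨ℓ2, y, hℓ2, hy0, hyℓ, hcov2, rfl⟩ := h2
  set z : ℕ → X := fun i => if i ≤ ℓ1 then x i else y (i - ℓ1) with hz
  have hz1 : ∀ i ≤ ℓ1, z i = x i := fun i hi => by simp [hz, hi]
  have hz2 : ∀ j, z (ℓ1 + j) = y j := by
    intro j
    rcases Nat.eq_zero_or_pos j with rfl | hj
    · simpa [hz] using hxℓ.trans hy0.symm
    · have : ¬ (ℓ1 + j ≤ ℓ1) := by omega
      simp [hz, this]
  refine ⟨ℓ1 + ℓ2, z, by omega, by rw [hz1 0 (by omega)]; exact hx0,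
    by rw [hz2 ℓ2]; exact hyℓ, ?_, ?_⟩
  · intro p hp
    have hq : ∀ a b c : ZMod 2, a + b = 0 → b + c = 0 → a + c = 0 := by decide
    have : A p + B p ≠ 0 ∨ B p + C p ≠ 0 := by
      by_contra h
      push_neg at h
      exact hp (hq _ _ _ h.1 h.2)
    rcases this with h | h
    · obtain ⟨i, hi, hix⟩ := hcov1 p h
      exact ⟨i, by omega, by rw [hz1 i (by omega)]; exact hix⟩
    · obtain ⟨j, hj, hjy⟩ := hcov2 p h
      exact ⟨ℓ1 + j, by omega, by rw [hz2 j]; exact hjy⟩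
  · rw [Finset.sum_range_add]
    congr 1
    · refine Finset.sum_congr rfl fun i hi => ?_
      rw [Finset.mem_range] at hi
      rw [hz1 i (by omega), hz1 (i + 1) (by omega)]
    · refine Finset.sum_congr rfl fun j hj => ?_
      rw [hz2 j, show ℓ1 + j + 1 = ℓ1 + (j + 1) by omega, hz2 (j + 1)]

end TSmetricHelpers

/-- For every metric space `(X, ρ)` and basepoint `x° ∈ X`, the pinned
travelling salesman function `TS_{ρ,x°}` is a metric on the group `Z₂^{⊕X}` of finitely
supported functions `X → Z₂`. -/
theorem TS_is_metric {X : Type*} [MetricSpace X] (x0 : X) :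
    (∀ A B : X →₀ ZMod 2, 0 ≤ TS dist x0 ⇑A ⇑B) ∧
    (∀ A B : X →₀ ZMod 2, TS dist x0 ⇑A ⇑B = 0 ↔ A = B) ∧
    (∀ A B : X →₀ ZMod 2, TS dist x0 ⇑A ⇑B = TS dist x0 ⇑B ⇑A) ∧
    (∀ A B C : X →₀ ZMod 2,
      TS dist x0 ⇑A ⇑C ≤ TS dist x0 ⇑A ⇑B + TS dist x0 ⇑B ⇑C) := by
  classical
  have hbd : ∀ A B : X →₀ ZMod 2, BddBelow (TSset dist x0 ⇑A ⇑B) :=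
    fun A B => ⟨0, TSset_nonneg x0 ⇑A ⇑B⟩
  have hinf0 : ∀ A B : X →₀ ZMod 2, 0 ≤ sInf (TSset dist x0 ⇑A ⇑B) :=
    fun A B => Real.sInf_nonneg (TSset_nonneg x0 ⇑A ⇑B)
  refine ⟨?_, ?_, ?_, ?_⟩
  · intro A B
    rw [TS_eq_TSset]
    split_ifs with h
    · exact le_refl 0
    · have := hinf0 A B; linarith
  · intro A B
    rw [TS_eq_TSset]
    split_ifs with h
    · exact iff_of_true rfl (DFunLike.coe_injective h)
    · refine iff_of_false ?_ (fun hAB => h (by rw [hAB]))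
      have := hinf0 A B
      intro h0; linarith
  · intro A B
    rw [TS_eq_TSset, TS_eq_TSset, TSset_comm]
    by_cases h : (⇑A : X → ZMod 2) = ⇑B
    · rw [if_pos h, if_pos h.symm]
    · rw [if_neg h, if_neg (Ne.symm h)]
  · intro A B C
    have hzero : ∀ D : X →₀ ZMod 2, TS dist x0 ⇑D ⇑D = 0 := fun D => by
      rw [TS_eq_TSset, if_pos rfl]
    by_cases hAB : (⇑A : X → ZMod 2) = ⇑B
    · rw [hAB, hzero B, zero_add]
    by_cases hBC : (⇑B : X → ZMod 2) = ⇑C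
    · rw [← hBC, hzero B, add_zero]
    by_cases hAC : (⇑A : X → ZMod 2) = ⇑C
    · have h1 : 0 ≤ TS dist x0 ⇑A ⇑B := by
        rw [TS_eq_TSset, if_neg hAB]; have := hinf0 A B; linarith
      have h2 : 0 ≤ TS dist x0 ⇑B ⇑C := by
        rw [TS_eq_TSset, if_neg hBC]; have := hinf0 B C; linarith
      rw [TS_eq_TSset, if_pos hAC]; linarith
    · have key : sInf (TSset dist x0 ⇑A ⇑C) ≤
          sInf (TSset dist x0 ⇑A ⇑B) + sInf (TSset dist x0 ⇑B ⇑C) := by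
        rw [← sub_le_iff_le_add]
        refine le_csInf (TSset_nonempty x0 A B) fun a ha => ?_
        rw [sub_le_iff_le_add, ← sub_le_iff_le_add']
        refine le_csInf (TSset_nonempty x0 B C) fun b hb => ?_
        rw [sub_le_iff_le_add']
        exact csInf_le (hbd A C) (TSset_concat x0 ⇑A ⇑B ⇑C ha hb)
      rw [TS_eq_TSset, TS_eq_TSset, TS_eq_TSset, if_neg hAB, if_neg hBC, if_neg hAC]
      linarith
end

section
/- Let I be a nonempty finite set, C ≤ Z₂^I a Z₂-subspace with 1_I ∈ C (the all-ones vector), and define D := span_{Z₂}({1_{Z₆^I}} ∪ {L_a : a ∈ C}) ≤ Z₂^{Z₆^I}. Then: (i) D is invariant under the translation action of Z₆^I (Trans_v F := F(· − v)); (ii) D^⊥ ∩ {W ∈ Z₂^{Z₆^I} : spt W ⊆ B} = ξ(C^⊥); and (iii) for all V, V' : Z₆^I → Z₂ supported on B, the infimum inf{TS_Ham(V, W) : W ∈ V' + D^⊥} is attained at some W ∈ V' + D^⊥ that is also supported on B. -/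
open scoped BigOperators
open scoped Classical
open MeasureTheory Filter
open scoped ENNReal NNReal

/-! Parts (i) and (ii) are linear algebra: translating `L_a` by `v` adds the constant `L_a(v)`,
and pairing `ξ(a)` with `1` and with `L_c` gives `⟨a, 1⟩` and `⟨a, c⟩`.

For (iii), the projection `R = Rmap` fixes functions supported on `B`, maps `D^⊥` into itself
(this is where `1_I ∈ C` enters), and does not increase `TS_Ham(V, ·)`. Indeed, a tour covering
`spt(V + W)` visits, for every `y` with `R(V + W)(e_y) ≠ 0`, a point whose `y`-th coordinate is
odd, so it travels at least `2` in that coordinate; and the tour `0, e_y, 0, e_y', 0, …` through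
these `e_y`, which covers `spt(V + R W)`, has length `2` per such `y`. So the infimum is a minimum
over the finitely many `B`-supported elements of `V' + D^⊥`. -/

open Finset

section ZMod6

lemma zbar_zero : zbar 0 = 0 := by decide

lemma zbar_sub : ∀ a b : ZMod 6, zbar (a - b) = zbar a - zbar b := by decide

lemma zbar_single_one {I : Type*} (x y : I) :
    zbar ((Pi.single x 1 : I → ZMod 6) y) = (Pi.single x 1 : I → ZMod 2) y := by
  rcases eq_or_ne y x with rfl | h
  · rw [Pi.single_eq_same, Pi.single_eq_same]
    decide
  · simp only [Pi.single_eq_of_ne h, zbar_zero]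

lemma single_one_inj {I : Type*} {x y : I} :
    (Pi.single x 1 : I → ZMod 6) = Pi.single y 1 ↔ x = y := by
  refine ⟨fun h => by_contra fun hxy => ?_, fun h => h ▸ rfl⟩
  have := congrFun h x
  rw [Pi.single_eq_same, Pi.single_eq_of_ne hxy] at this
  exact absurd this (by decide)

lemma z6dist_self : ∀ a : ZMod 6, z6dist a a = 0 := by decide

lemma z6dist_triangle : ∀ a b c : ZMod 6, z6dist a c ≤ z6dist a b + z6dist b c := by decide

lemma one_le_z6dist_zero_left : ∀ a : ZMod 6, a ≠ 0 → 1 ≤ z6dist 0 a := by decide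

lemma one_le_z6dist_zero_right : ∀ a : ZMod 6, a ≠ 0 → 1 ≤ z6dist a 0 := by decide

lemma z6dist_le_sum_Ico (g : ℕ → ZMod 6) {m n : ℕ} (hmn : m ≤ n) :
    z6dist (g m) (g n) ≤ ∑ j ∈ Ico m n, z6dist (g j) (g (j + 1)) := by
  induction n, hmn using Nat.le_induction with
  | base => simp [z6dist_self]
  | succ n hmn ih =>
    rw [sum_Ico_succ_top hmn]
    exact (z6dist_triangle _ (g n) _).trans (Nat.add_le_add_right ih _)

lemma two_le_sum_z6dist (g : ℕ → ZMod 6) {i ℓ : ℕ} (hiℓ : i ≤ ℓ) (h0 : g 0 = 0)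
    (hℓ : g ℓ = 0) (hi : g i ≠ 0) : 2 ≤ ∑ j ∈ range ℓ, z6dist (g j) (g (j + 1)) := by
  have to_i := z6dist_le_sum_Ico g (Nat.zero_le i)
  have from_i := z6dist_le_sum_Ico g hiℓ
  rw [h0] at to_i
  rw [hℓ] at from_i
  rw [range_eq_Ico, ← sum_Ico_consecutive _ (Nat.zero_le i) hiℓ]
  have := one_le_z6dist_zero_left _ hi
  have := one_le_z6dist_zero_right _ hi
  omega

end ZMod6

section Hamming

variable {I : Type*} [Fintype I]

lemma hamZ6_nonneg (u v : I → ZMod 6) : 0 ≤ hamZ6 u v :=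
  sum_nonneg fun _ _ => Nat.cast_nonneg _

lemma hamZ6_self (u : I → ZMod 6) : hamZ6 u u = 0 := by
  simp [hamZ6, z6dist_self]

lemma hamZ6_zero_single (x : I) : hamZ6 0 (Pi.single x 1) = 1 := by
  rw [hamZ6, sum_eq_single x (fun y _ hy => by simp [Pi.single_eq_of_ne hy, z6dist_self])
    (by simp)]
  simp [show z6dist 0 1 = 1 by decide]

lemma hamZ6_single_zero (x : I) : hamZ6 (Pi.single x 1) 0 = 1 := by
  rw [hamZ6, sum_eq_single x (fun y _ hy => by simp [Pi.single_eq_of_ne hy, z6dist_self])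
    (by simp)]
  simp [show z6dist 1 0 = 1 by decide]

lemma two_mul_card_le_sum_hamZ6 (x : ℕ → I → ZMod 6) {ℓ : ℕ} (h0 : x 0 = 0) (hℓ : x ℓ = 0)
    (S : Finset I) (hS : ∀ y ∈ S, ∃ i < ℓ, x i y ≠ 0) :
    2 * (#S : ℝ) ≤ ∑ i ∈ range ℓ, hamZ6 (x i) (x (i + 1)) := by
  have two_le : ∀ y ∈ S, (2 : ℝ) ≤ ∑ i ∈ range ℓ, (z6dist (x i y) (x (i + 1) y) : ℝ) := by
    intro y hy
    obtain ⟨i, hi, hxi⟩ := hS y hy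
    exact_mod_cast two_le_sum_z6dist (fun j => x j y) hi.le (by simp [h0]) (by simp [hℓ]) hxi
  calc 2 * (#S : ℝ) = ∑ _y ∈ S, (2 : ℝ) := by simp [mul_comm]
    _ ≤ ∑ y ∈ S, ∑ i ∈ range ℓ, (z6dist (x i y) (x (i + 1) y) : ℝ) := sum_le_sum two_le
    _ ≤ ∑ y, ∑ i ∈ range ℓ, (z6dist (x i y) (x (i + 1) y) : ℝ) :=
      sum_le_sum_of_subset_of_nonneg (subset_univ S)
        fun _ _ _ => sum_nonneg fun _ _ => Nat.cast_nonneg _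
    _ = ∑ i ∈ range ℓ, hamZ6 (x i) (x (i + 1)) := sum_comm

end Hamming

section Tours

variable {X : Type*}

/-- The closed walk `x0, l[0], x0, l[1], …, x0, l[n-1], x0`, of length `2 * l.length`. -/
def petalTour (x0 : X) (l : List X) (i : ℕ) : X :=
  if Even i then x0 else l.getD (i / 2) x0

lemma petalTour_of_even (x0 : X) (l : List X) {i : ℕ} (hi : Even i) : petalTour x0 l i = x0 :=
  if_pos hi

lemma petalTour_eq_or_mem (x0 : X) (l : List X) (i : ℕ) :
    petalTour x0 l i = x0 ∨ petalTour x0 l i ∈ l := by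
  unfold petalTour
  split_ifs
  · exact Or.inl rfl
  rcases lt_or_ge (i / 2) l.length with h | h
  · exact Or.inr (List.getD_eq_getElem _ _ h ▸ List.getElem_mem h)
  · exact Or.inl (List.getD_eq_default _ _ h)

lemma exists_petalTour_eq (x0 : X) {l : List X} {p : X} (hp : p ∈ l) :
    ∃ i < 2 * l.length, petalTour x0 l i = p := by
  obtain ⟨k, hk, rfl⟩ := List.getElem_of_mem hp
  refine ⟨2 * k + 1, by omega, ?_⟩
  rw [petalTour, if_neg (by simp), show (2 * k + 1) / 2 = k by omega, List.getD_eq_getElem _ _ hk]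

lemma sum_petalTour_le (ρ : X → X → ℝ) (x0 : X) (l : List X) {r : ℝ} (h0 : ρ x0 x0 ≤ r)
    (hl : ∀ p ∈ l, ρ x0 p ≤ r ∧ ρ p x0 ≤ r) :
    ∑ i ∈ range (2 * l.length), ρ (petalTour x0 l i) (petalTour x0 l (i + 1)) ≤
      2 * l.length * r := by
  have step : ∀ i, ρ (petalTour x0 l i) (petalTour x0 l (i + 1)) ≤ r := by
    intro i
    rcases Nat.even_or_odd i with hi | hi
    · rw [petalTour_of_even x0 l hi]
      rcases petalTour_eq_or_mem x0 l (i + 1) with h | h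
      · rwa [h]
      · exact (hl _ h).1
    · rw [petalTour_of_even x0 l hi.add_one]
      rcases petalTour_eq_or_mem x0 l i with h | h
      · rwa [h]
      · exact (hl _ h).2
  calc _ ≤ ∑ _i ∈ range (2 * l.length), r := sum_le_sum fun i _ => step i
    _ = 2 * l.length * r := by simp

lemma exists_tour_through_all [Fintype X] (x0 : X) :
    ∃ (ℓ : ℕ) (x : ℕ → X), 1 ≤ ℓ ∧ x 0 = x0 ∧ x ℓ = x0 ∧ ∀ p, ∃ i < ℓ, x i = p := by
  have cover := fun p => exists_petalTour_eq x0 (mem_toList.2 (mem_univ p))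
  obtain ⟨i, hi, -⟩ := cover x0
  exact ⟨_, petalTour x0 univ.toList, by omega, petalTour_of_even x0 _ Even.zero,
    petalTour_of_even x0 _ (even_two_mul _), cover⟩

variable {ρ : X → X → ℝ} {x0 : X}

lemma TS_nonneg (hρ : ∀ x y, 0 ≤ ρ x y) (A B : X → ZMod 2) : 0 ≤ TS ρ x0 A B := by
  unfold TS
  split_ifs
  · exact le_rfl
  have : 0 ≤ sInf {L : ℝ | ∃ (ℓ : ℕ) (x : ℕ → X), 1 ≤ ℓ ∧ x 0 = x0 ∧ x ℓ = x0 ∧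
      (∀ p : X, A p + B p ≠ 0 → ∃ i < ℓ, x i = p) ∧
      L = ∑ i ∈ range ℓ, ρ (x i) (x (i + 1))} :=
    Real.sInf_nonneg (by rintro _ ⟨ℓ, x, -, -, -, -, rfl⟩; exact sum_nonneg fun _ _ => hρ _ _)
  linarith

lemma TS_le_TS [Finite X] (hρ : ∀ x y, 0 ≤ ρ x y) {A B A' B' : X → ZMod 2}
    (hAB : A' = B' → A = B) (L : ℝ)
    (hupper : ∃ (ℓ : ℕ) (x : ℕ → X), x 0 = x0 ∧ x ℓ = x0 ∧
      (∀ p, A p + B p ≠ 0 → ∃ i < ℓ, x i = p) ∧ ∑ i ∈ range ℓ, ρ (x i) (x (i + 1)) ≤ L)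
    (hlower : ∀ (ℓ : ℕ) (x : ℕ → X), x 0 = x0 → x ℓ = x0 →
      (∀ p, A' p + B' p ≠ 0 → ∃ i < ℓ, x i = p) → L ≤ ∑ i ∈ range ℓ, ρ (x i) (x (i + 1))) :
    TS ρ x0 A B ≤ TS ρ x0 A' B' := by
  by_cases hEq : A = B
  · rw [TS, if_pos hEq]
    exact TS_nonneg hρ A' B'
  rw [TS, TS, if_neg hEq, if_neg (mt hAB hEq), add_le_add_iff_left]
  obtain ⟨ℓ, x, h0, hℓ, hcov, hL⟩ := hupper
  have hℓ1 : 1 ≤ ℓ := by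
    obtain ⟨p, hp⟩ := Function.ne_iff.1 hEq
    obtain ⟨i, hi, -⟩ := hcov p (mt CharTwo.add_eq_zero.1 hp)
    omega
  have := Fintype.ofFinite X
  obtain ⟨ℓ', x', hℓ', h0', hℓ'', hall⟩ := exists_tour_through_all x0
  refine le_trans ?_ (hL.trans (le_csInf ?_ ?_))
  · exact csInf_le ⟨0, by rintro _ ⟨ℓ, x, -, -, -, -, rfl⟩; exact sum_nonneg fun _ _ => hρ _ _⟩
      ⟨ℓ, x, hℓ1, h0, hℓ, hcov, rfl⟩
  · exact ⟨∑ i ∈ range ℓ', ρ (x' i) (x' (i + 1)), ℓ', x', hℓ', h0', hℓ'', fun p _ => hall p, rfl⟩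
  · rintro _ ⟨ℓ, x, -, h0, hℓ, hcov, rfl⟩
    exact hlower ℓ x h0 hℓ hcov

end Tours

section Projection

variable {I : Type*} [Fintype I]

lemma La_sub (c : I → ZMod 2) (w v : I → ZMod 6) : La c (w - v) = La c w - La c v := by
  simp only [La, Pi.sub_apply, zbar_sub, sub_mul, sum_sub_distrib]

lemma comp_sub_mem_Dspan {C : Set (I → ZMod 2)} (v : I → ZMod 6)
    {F : (I → ZMod 6) → ZMod 2} (hF : F ∈ Dspan C) : (fun w => F (w - v)) ∈ Dspan C := by
  suffices Dspan C ≤ (Dspan C).comap (LinearMap.funLeft (ZMod 2) (ZMod 2) (· - v)) from this hF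
  refine Submodule.span_le.2 (Set.union_subset ?_ ?_)
  · rintro _ rfl
    exact Submodule.subset_span (Or.inl rfl)
  · rintro _ ⟨c, hc, rfl⟩
    have translate : (fun w => La c (w - v)) = La c - La c v • fun _ => 1 := by
      funext w
      simp [La_sub]
    change (fun w => La c (w - v)) ∈ Dspan C
    rw [translate]
    exact sub_mem (Submodule.subset_span (Or.inr ⟨c, hc, rfl⟩))
      (Submodule.smul_mem _ _ (Submodule.subset_span (Or.inl rfl)))

lemma mem_DperpSet_iff {C : Set (I → ZMod 2)} {W : (I → ZMod 6) → ZMod 2} :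
    W ∈ DperpSet C ↔ W ⬝ᵥ 1 = 0 ∧ ∀ c ∈ C, W ⬝ᵥ La c = 0 := by
  change Dspan C ≤ LinearMap.ker (dotProductBilin (ZMod 2) (ZMod 2) W) ↔ _
  simp [Dspan, Submodule.span_le, Set.subset_def, Pi.one_def]

lemma zero_mem_DperpSet (C : Set (I → ZMod 2)) : 0 ∈ DperpSet C :=
  fun _ _ => zero_dotProduct _

lemma xi_apply_single (a : I → ZMod 2) (x : I) : xi a (Pi.single x 1) = a x := by
  simp [xi, single_one_inj]

lemma xi_apply_of_notMem (a : I → ZMod 2) {w : I → ZMod 6} (hw : w ∉ Bset) : xi a w = 0 :=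
  sum_eq_zero fun x _ => if_neg fun h => hw ⟨x, h.symm⟩

lemma support_xi_subset (a : I → ZMod 2) : Function.support (xi a) ⊆ Bset :=
  fun _ hw => by_contra fun h => hw (xi_apply_of_notMem a h)

lemma eq_xi_of_support_subset {W : (I → ZMod 6) → ZMod 2} (h : Function.support W ⊆ Bset) :
    W = xi fun x => W (Pi.single x 1) := by
  funext w
  by_cases hw : w ∈ Bset
  · obtain ⟨x, rfl⟩ := hw
    rw [xi_apply_single]
  · rw [xi_apply_of_notMem _ hw]
    exact Function.notMem_support.1 fun hW => hw (h hW)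

lemma xi_sub (a b : I → ZMod 2) : xi (a - b) = xi a - xi b := by
  funext w
  simp only [xi, Pi.sub_apply, ← sum_sub_distrib]
  refine sum_congr rfl fun x _ => ?_
  split_ifs <;> simp

lemma xi_dotProduct (a : I → ZMod 2) (F : (I → ZMod 6) → ZMod 2) :
    xi a ⬝ᵥ F = ∑ x, a x * F (Pi.single x 1) := by
  simp only [dotProduct, xi, sum_mul, ite_mul, zero_mul]
  rw [sum_comm]
  simp

noncomputable def rcoeff (W : (I → ZMod 6) → ZMod 2) (x : I) : ZMod 2 :=
  W ⬝ᵥ fun v => zbar (v x)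

lemma Rmap_eq_xi_rcoeff (W : (I → ZMod 6) → ZMod 2) : Rmap W = xi (rcoeff W) := rfl

lemma rcoeff_sub (W W' : (I → ZMod 6) → ZMod 2) : rcoeff (W - W') = rcoeff W - rcoeff W' :=
  funext fun _ => sub_dotProduct _ _ _

lemma Rmap_sub (W W' : (I → ZMod 6) → ZMod 2) : Rmap (W - W') = Rmap W - Rmap W' := by
  simp only [Rmap_eq_xi_rcoeff, rcoeff_sub, xi_sub]

lemma rcoeff_xi (a : I → ZMod 2) : rcoeff (xi a) = a := by
  funext x
  simp only [rcoeff, xi_dotProduct, zbar_single_one]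
  simp [Pi.single_apply]

lemma Rmap_of_support_subset {W : (I → ZMod 6) → ZMod 2} (h : Function.support W ⊆ Bset) :
    Rmap W = W := by
  rw [eq_xi_of_support_subset h, Rmap_eq_xi_rcoeff, rcoeff_xi]

lemma dotProduct_La (W : (I → ZMod 6) → ZMod 2) (c : I → ZMod 2) :
    W ⬝ᵥ La c = rcoeff W ⬝ᵥ c := by
  simp only [dotProduct, La, rcoeff, mul_sum, sum_mul]
  rw [sum_comm]
  simp only [mul_assoc]

lemma xi_mem_DperpSet_iff {C : Set (I → ZMod 2)} (hC : 1 ∈ C) (a : I → ZMod 2) :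
    xi a ∈ DperpSet C ↔ a ∈ perp2 C := by
  have xi_one : xi a ⬝ᵥ 1 = a ⬝ᵥ 1 := by
    rw [xi_dotProduct, dotProduct_one]
    simp
  simp only [mem_DperpSet_iff, xi_one, dotProduct_La, rcoeff_xi]
  exact ⟨fun h => h.2, fun h => ⟨h 1 hC, h⟩⟩

lemma Rmap_mem_DperpSet {C : Set (I → ZMod 2)} (hC : 1 ∈ C) {W : (I → ZMod 6) → ZMod 2}
    (hW : W ∈ DperpSet C) : Rmap W ∈ DperpSet C :=
  (xi_mem_DperpSet_iff hC _).2 fun c hc => (dotProduct_La W c).symm.trans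
    ((mem_DperpSet_iff.1 hW).2 c hc)

end Projection

lemma TSHam_Rmap_le {I : Type*} [Fintype I] {V : (I → ZMod 6) → ZMod 2} (hV : Function.support V ⊆ Bset)
    (W : (I → ZMod 6) → ZMod 2) : TSHam V (Rmap W) ≤ TSHam V W := by
  set S := univ.filter fun y => rcoeff (V - W) y ≠ 0
  set l := S.toList.map fun y => (Pi.single y 1 : I → ZMod 6)
  have hRV : Rmap V = V := Rmap_of_support_subset hV
  refine TS_le_TS hamZ6_nonneg (fun h => by rw [← h, hRV]) (2 * #S) ?_ ?_
  · refine ⟨2 * l.length, petalTour 0 l, petalTour_of_even 0 l Even.zero,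
      petalTour_of_even 0 l (even_two_mul _), fun p hp => ?_, ?_⟩
    · rw [← CharTwo.sub_eq_add, ← Pi.sub_apply, ← hRV, ← Rmap_sub, Rmap_eq_xi_rcoeff] at hp
      obtain ⟨y, rfl⟩ := support_xi_subset _ hp
      rw [xi_apply_single] at hp
      exact exists_petalTour_eq 0 (List.mem_map_of_mem (mem_toList.2 (by simpa [S] using hp)))
    · have hlen : (l.length : ℝ) = #S := by simp [l]
      refine (sum_petalTour_le hamZ6 0 l (r := 1) (by simp [hamZ6_self]) fun p hp => ?_).trans
        (by simp [hlen])
      obtain ⟨y, -, rfl⟩ := List.mem_map.1 hp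
      exact ⟨(hamZ6_zero_single y).le, (hamZ6_single_zero y).le⟩
  · intro ℓ x h0 hℓ hcov
    refine two_mul_card_le_sum_hamZ6 x h0 hℓ S fun y hy => ?_
    obtain ⟨v, -, hv⟩ := exists_ne_zero_of_sum_ne_zero (mem_filter.1 hy).2
    obtain ⟨i, hi, rfl⟩ := hcov v (by simpa [← CharTwo.sub_eq_add] using left_ne_zero_of_mul hv)
    exact ⟨i, hi, fun h => right_ne_zero_of_mul hv (by simp [h, zbar_zero])⟩

theorem Dspan_properties_general {I : Type*} [Fintype I]
    (C : Submodule (ZMod 2) (I → ZMod 2)) (hC : (fun _ => (1 : ZMod 2)) ∈ C) :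
    (∀ v : I → ZMod 6, ∀ F ∈ Dspan (C : Set (I → ZMod 2)),
      (fun w => F (w - v)) ∈ Dspan (C : Set (I → ZMod 2))) ∧
    (∀ W : (I → ZMod 6) → ZMod 2,
      (W ∈ DperpSet (C : Set (I → ZMod 2)) ∧ Function.support W ⊆ Bset) ↔
      (∃ a ∈ perp2 (C : Set (I → ZMod 2)), xi a = W)) ∧
    (∀ V V' : (I → ZMod 6) → ZMod 2,
      Function.support V ⊆ Bset → Function.support V' ⊆ Bset →
      ∃ W : (I → ZMod 6) → ZMod 2,
        W - V' ∈ DperpSet (C : Set (I → ZMod 2)) ∧ Function.support W ⊆ Bset ∧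
        ∀ W' : (I → ZMod 6) → ZMod 2, W' - V' ∈ DperpSet (C : Set (I → ZMod 2)) →
          TSHam V W ≤ TSHam V W') := by
  refine ⟨fun v F hF => comp_sub_mem_Dspan v hF, fun W => ⟨?_, ?_⟩, fun V V' hV hV' => ?_⟩
  · rintro ⟨hW, hWB⟩
    rw [eq_xi_of_support_subset hWB] at hW ⊢
    exact ⟨_, (xi_mem_DperpSet_iff hC _).1 hW, rfl⟩
  · rintro ⟨a, ha, rfl⟩
    exact ⟨(xi_mem_DperpSet_iff hC a).2 ha, support_xi_subset a⟩
  · set T := {W | W - V' ∈ DperpSet (C : Set (I → ZMod 2)) ∧ Function.support W ⊆ Bset}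
    have hV'T : V' ∈ T := ⟨by simpa using zero_mem_DperpSet _, hV'⟩
    obtain ⟨W, ⟨hWD, hWB⟩, hmin⟩ := T.exists_min_image (TSHam V) T.toFinite ⟨V', hV'T⟩
    refine ⟨W, hWD, hWB, fun W' hW' => (hmin (Rmap W') ⟨?_, ?_⟩).trans (TSHam_Rmap_le hV W')⟩
    · rw [← Rmap_of_support_subset hV', ← Rmap_sub]
      exact Rmap_mem_DperpSet hC hW'
    · exact support_xi_subset _

/-- For a nonempty finite `I` and a subspace `C ≤ Z₂^I` with `1_I ∈ C`,
the subspace `D := span({1_{Z₆^I}} ∪ {L_a : a ∈ C}) ≤ Z₂^{Z₆^I}` satisfies: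
(i) `D` is invariant under translations of `Z₆^I`;
(ii) `D^⊥ ∩ {spt ⊆ B} = ξ(C^⊥)`;
(iii) for `V, V'` supported on `B`, the infimum `inf {TS_Ham(V, W) : W ∈ V' + D^⊥}` is
attained at some `W ∈ V' + D^⊥` supported on `B`. -/
theorem Dspan_properties {I : Type*} [Fintype I] [Nonempty I]
    (C : Submodule (ZMod 2) (I → ZMod 2)) (hC : (fun _ => (1 : ZMod 2)) ∈ C) :
    (∀ v : I → ZMod 6, ∀ F ∈ Dspan (C : Set (I → ZMod 2)),
      (fun w => F (w - v)) ∈ Dspan (C : Set (I → ZMod 2))) ∧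
    (∀ W : (I → ZMod 6) → ZMod 2,
      (W ∈ DperpSet (C : Set (I → ZMod 2)) ∧ Function.support W ⊆ Bset) ↔
      (∃ a ∈ perp2 (C : Set (I → ZMod 2)), xi a = W)) ∧
    (∀ V V' : (I → ZMod 6) → ZMod 2,
      Function.support V ⊆ Bset → Function.support V' ⊆ Bset →
      ∃ W : (I → ZMod 6) → ZMod 2,
        W - V' ∈ DperpSet (C : Set (I → ZMod 2)) ∧ Function.support W ⊆ Bset ∧
        ∀ W' : (I → ZMod 6) → ZMod 2, W' - V' ∈ DperpSet (C : Set (I → ZMod 2)) →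
          TSHam V W ≤ TSHam V W') :=
  Dspan_properties_general C hC
end

section
/- Let I be a nonempty finite set, C ≤ Z₂^I a Z₂-subspace with 1_I ∈ C, and D := span_{Z₂}({1_{Z₆^I}} ∪ {L_a : a ∈ C}) ≤ Z₂^{Z₆^I}. Then the map κ° : Z₂^I → Z₂^{Z₆^I}/D^⊥ sending a to the coset ξ(a) + D^⊥ is Z₂-linear with kernel exactly C^⊥; moreover, for all a, b ∈ Z₂^I with a − b ∉ C^⊥, TS_{Ham/D^⊥}(κ°(a), κ°(b)) = 2·d_{Ham/C^⊥}(a + C^⊥, b + C^⊥) + 1. Consequently, the induced injection κ : Z₂^I/C^⊥ → Z₂^{Z₆^I}/D^⊥ is a bi-Lipschitz embedding of d_{Ham/C^⊥} into TS_{Ham/D^⊥} with distortion at most 2. -/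
open scoped BigOperators
open scoped Classical
open MeasureTheory Filter
open scoped ENNReal NNReal

noncomputable section KNauxSection
namespace KN
set_option linter.unusedSectionVars false
set_option maxHeartbeats 1000000

variable {I : Type*} [Fintype I]

lemma zbar_zero' : zbar 0 = 0 := by decide
lemma zbar_one' : zbar 1 = 1 := by decide
lemma z6_one_le : ∀ u v : ZMod 6, zbar u ≠ zbar v → 1 ≤ z6dist u v := by decide
lemma z6dist_self : ∀ u : ZMod 6, z6dist u u = 0 := by decide
lemma z6dist_zero_one : z6dist 0 1 = 1 := by decide
lemma z6dist_one_zero : z6dist 1 0 = 1 := by decide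
lemma z2_add_eq_zero : ∀ u v : ZMod 2, (u + v = 0 ↔ u = v) := by decide

lemma single_inj {x y : I} (h : (Pi.single x (1:ZMod 6) : I → ZMod 6) = Pi.single y 1) :
    x = y := by
  by_contra hne
  have := congrFun h x
  rw [Pi.single_eq_same, Pi.single_eq_of_ne hne] at this
  exact (by decide : (1:ZMod 6) ≠ 0) this

lemma xi_add (a b : I → ZMod 2) : xi (a + b) = xi a + xi b := by
  funext w
  simp only [xi, Pi.add_apply, ← Finset.sum_add_distrib]
  exact Finset.sum_congr rfl fun x _ => by split <;> simp

lemma xi_apply_single (e : I → ZMod 2) (x : I) :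
    xi e (Pi.single x (1:ZMod 6)) = e x := by
  rw [xi]
  rw [Finset.sum_congr rfl (fun y _ => show
    (if (Pi.single x (1:ZMod 6) : I → ZMod 6) = Pi.single y 1 then e y else 0)
      = if y = x then e y else 0 by
    congr 1
    simp only [eq_iff_iff]
    constructor
    · intro h; exact (single_inj h).symm
    · rintro rfl; rfl)]
  simp

lemma La_single (c : I → ZMod 2) (x : I) : La c (Pi.single x (1:ZMod 6)) = c x := by
  rw [La]
  rw [Finset.sum_congr rfl (fun j _ => show
      zbar ((Pi.single x (1:ZMod 6) : I → ZMod 6) j) * c j = if j = x then c j else 0 by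
    rcases eq_or_ne j x with rfl | h
    · simp [Pi.single_eq_same, zbar_one']
    · simp [Pi.single_eq_of_ne h, zbar_zero', h])]
  simp

lemma sum_xi_mul (e : I → ZMod 2) (f : (I → ZMod 6) → ZMod 2) :
    ∑ w, xi e w * f w = ∑ x, e x * f (Pi.single x 1) := by
  simp only [xi, Finset.sum_mul, ite_mul, zero_mul]
  rw [Finset.sum_comm]
  exact Finset.sum_congr rfl fun x _ => by simp [eq_comm]

lemma La_mem_Dspan {C : Set (I → ZMod 2)} {c : I → ZMod 2} (hc : c ∈ C) :
    La c ∈ Dspan C := Submodule.subset_span (Or.inr ⟨c, hc, rfl⟩)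

lemma mem_DperpSet_of (C : Set (I → ZMod 2)) (W : (I → ZMod 6) → ZMod 2)
    (h1 : ipF W (fun _ => 1) = 0) (h2 : ∀ c ∈ C, ipF W (La c) = 0) :
    W ∈ DperpSet C := by
  intro D' hD'
  induction hD' using Submodule.span_induction with
  | mem x hx =>
    rcases hx with hx | ⟨c, hc, rfl⟩
    · rw [Set.mem_singleton_iff] at hx; subst hx; exact h1
    · exact h2 c hc
  | zero => simp [ipF]
  | add x y _ _ hx hy =>
    rw [ipF] at *
    simp only [Pi.add_apply, mul_add, Finset.sum_add_distrib, hx, hy, add_zero]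
  | smul r x _ hx =>
    rw [ipF] at *
    simp only [Pi.smul_apply, smul_eq_mul, mul_left_comm, ← Finset.mul_sum, hx, mul_zero]

lemma ipF_xi_La (e c : I → ZMod 2) : ipF (xi e) (La c) = ip2 e c := by
  rw [ipF, sum_xi_mul, ip2]
  exact Finset.sum_congr rfl fun x _ => by rw [La_single]

lemma ipF_xi_one (e : I → ZMod 2) : ipF (xi e) (fun _ => 1) = ∑ x, e x := by
  rw [ipF, sum_xi_mul]; simp

lemma xi_mem_iff (C : Submodule (ZMod 2) (I → ZMod 2)) (hC : (fun _ => (1:ZMod 2)) ∈ C)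
    (a : I → ZMod 2) :
    xi a ∈ DperpSet (C : Set (I → ZMod 2)) ↔ a ∈ perp2 (C : Set (I → ZMod 2)) := by
  constructor
  · intro h c hc
    have := h (La c) (La_mem_Dspan hc)
    rwa [ipF_xi_La] at this
  · intro h
    refine mem_DperpSet_of _ _ ?_ ?_
    · rw [ipF_xi_one]
      have := h _ hC
      rw [ip2] at this; simpa using this
    · intro c hc; rw [ipF_xi_La]; exact h c hc

/-! metric lemmas -/

lemma hamZ6_nonneg (u v : I → ZMod 6) : 0 ≤ hamZ6 u v :=
  Finset.sum_nonneg fun x _ => Nat.cast_nonneg _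

lemma point_zs (x j : I) :
    ((z6dist ((0 : I → ZMod 6) j) ((Pi.single x (1:ZMod 6) : I → ZMod 6) j) : ℕ) : ℝ)
      = if j = x then 1 else 0 := by
  rcases eq_or_ne j x with rfl | h
  · simp [Pi.single_eq_same, z6dist_zero_one]
  · simp [Pi.single_eq_of_ne h, z6dist_self, h]

lemma point_sz (x j : I) :
    ((z6dist ((Pi.single x (1:ZMod 6) : I → ZMod 6) j) ((0 : I → ZMod 6) j) : ℕ) : ℝ)
      = if j = x then 1 else 0 := by
  rcases eq_or_ne j x with rfl | h
  · simp [Pi.single_eq_same, z6dist_one_zero]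
  · simp [Pi.single_eq_of_ne h, z6dist_self, h]

lemma hamZ6_zero_single (x : I) : hamZ6 0 (Pi.single x (1:ZMod 6)) = 1 := by
  rw [hamZ6, Finset.sum_congr rfl (fun j _ => point_zs x j)]
  simp

lemma hamZ6_single_zero (x : I) : hamZ6 (Pi.single x (1:ZMod 6)) 0 = 1 := by
  rw [hamZ6, Finset.sum_congr rfl (fun j _ => point_sz x j)]
  simp

lemma hammingDist_le_hamZ6 (u v : I → ZMod 6) :
    ((hammingDist (fun j => zbar (u j)) (fun j => zbar (v j)) : ℕ) : ℝ) ≤ hamZ6 u v := by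
  rw [show hammingDist (fun j => zbar (u j)) (fun j => zbar (v j))
      = ∑ j, ite (zbar (u j) ≠ zbar (v j)) 1 0 from Finset.card_filter _ _, hamZ6]
  push_cast
  refine Finset.sum_le_sum fun j _ => ?_
  split
  · next h => exact_mod_cast Nat.one_le_cast.mpr (z6_one_le _ _ h)
  · positivity

/-! tours -/

def toursSet (A B : (I → ZMod 6) → ZMod 2) : Set ℝ :=
  {L : ℝ | ∃ (ℓ : ℕ) (x : ℕ → I → ZMod 6), 1 ≤ ℓ ∧ x 0 = 0 ∧ x ℓ = 0 ∧
    (∀ p : I → ZMod 6, A p + B p ≠ 0 → ∃ i < ℓ, x i = p) ∧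
    L = ∑ i ∈ Finset.range ℓ, hamZ6 (x i) (x (i + 1))}

lemma TSHam_eq (A B : (I → ZMod 6) → ZMod 2) :
    TSHam A B = if A = B then 0 else 1 + sInf (toursSet A B) := by
  rw [TSHam, TS]
  rcases eq_or_ne A B with h | h
  · rw [if_pos h, if_pos h]
  · rw [if_neg h, if_neg h]
    rfl

lemma toursSet_nonneg (A B : (I → ZMod 6) → ZMod 2) :
    ∀ L ∈ toursSet A B, 0 ≤ L := by
  rintro L ⟨ℓ, x, -, -, -, -, rfl⟩
  exact Finset.sum_nonneg fun i _ => hamZ6_nonneg _ _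

lemma TSHam_nonneg (A B : (I → ZMod 6) → ZMod 2) : 0 ≤ TSHam A B := by
  rw [TSHam_eq]
  split
  · exact le_refl _
  · have := Real.sInf_nonneg (toursSet_nonneg A B)
    linarith

lemma toursSet_nonempty (A B : (I → ZMod 6) → ZMod 2) : (toursSet A B).Nonempty := by
  classical
  set l := (Finset.univ : Finset (I → ZMod 6)).toList with hl
  set g : ℕ → I → ZMod 6 :=
    fun i => if h : 1 ≤ i ∧ i - 1 < l.length then l.get ⟨i - 1, h.2⟩ else 0 with hg
  refine ⟨_, l.length + 2, g, by omega, ?_, ?_, ?_, rfl⟩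
  · simp only [hg]; rw [dif_neg (by omega)]
  · simp only [hg]; rw [dif_neg (by omega)]
  · intro p _
    have hp : p ∈ l := by rw [hl, Finset.mem_toList]; exact Finset.mem_univ p
    obtain ⟨j, hj⟩ := List.mem_iff_get.mp hp
    refine ⟨j.1 + 1, by have := j.2; omega, ?_⟩
    have hcond : 1 ≤ j.1 + 1 ∧ j.1 + 1 - 1 < l.length := ⟨by omega, by have := j.2; omega⟩
    simp only [hg]; rw [dif_pos hcond]
    have h2 : (⟨j.1 + 1 - 1, hcond.2⟩ : Fin l.length) = j :=
      Fin.ext (by show j.1 + 1 - 1 = j.1; omega)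
    rw [h2, hj]

/-! the lower bound -/

lemma tour_lb (C : Submodule (ZMod 2) (I → ZMod 2))
    (a b : I → ZMod 2) (V : (I → ZMod 6) → ZMod 2)
    (hV : V ∈ DperpSet (C : Set (I → ZMod 2)))
    (ℓ : ℕ) (x : ℕ → I → ZMod 6) (h0 : x 0 = 0) (hl : x ℓ = 0)
    (hvisit : ∀ p : I → ZMod 6, xi a p + (xi b + V) p ≠ 0 → ∃ i < ℓ, x i = p) :
    2 * quotDistBy (fun u v => (hammingDist u v : ℝ)) (perp2 (C : Set (I → ZMod 2))) a b
      ≤ ∑ i ∈ Finset.range ℓ, hamZ6 (x i) (x (i + 1)) := by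
  classical
  set F : (I → ZMod 6) → ZMod 2 := fun w => xi a w + (xi b w + V w) with hF
  set N : I → ℕ := fun j =>
    ((Finset.range ℓ).filter (fun i => zbar (x i j) ≠ zbar (x (i + 1) j))).card with hN
  set T : Finset I := Finset.univ.filter (fun j => N j ≠ 0) with hT
  set m : I → ZMod 2 := fun j => ∑ w, F w * zbar (w j) with hm
  have hconst : ∀ j, N j = 0 → ∀ i, i ≤ ℓ → zbar (x i j) = 0 := by
    intro j hj
    have hall : ∀ i ∈ Finset.range ℓ, zbar (x i j) = zbar (x (i + 1) j) := by
      intro i hi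
      by_contra hne
      have hmem : i ∈ (Finset.range ℓ).filter
          (fun i => zbar (x i j) ≠ zbar (x (i + 1) j)) :=
        Finset.mem_filter.mpr ⟨hi, hne⟩
      have := Finset.card_pos.mpr ⟨i, hmem⟩
      have hNj : N j = ((Finset.range ℓ).filter
          (fun i => zbar (x i j) ≠ zbar (x (i + 1) j))).card := rfl
      omega
    intro i
    induction i with
    | zero => intro _; rw [h0]; simpa using zbar_zero'
    | succ n ih =>
      intro hle
      rw [← hall n (Finset.mem_range.mpr (by omega))]
      exact ih (by omega)
  have hmT : ∀ j, N j = 0 → m j = 0 := by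
    intro j hj
    show (∑ w, F w * zbar (w j)) = 0
    refine Finset.sum_eq_zero fun w _ => ?_
    rcases eq_or_ne (F w) 0 with h | h
    · rw [h, zero_mul]
    · obtain ⟨i, hi, hxi⟩ := hvisit w h
      rw [← hxi, hconst j hj i (le_of_lt hi), mul_zero]
  have hkey : ∀ c ∈ C, ip2 m c = ip2 (fun j => a j + b j) c := by
    intro c hc
    have h1 : ip2 m c = ∑ w, F w * La c w := by
      rw [ip2]
      have hp : ∀ j : I, m j * c j = ∑ w : I → ZMod 6, F w * (zbar (w j) * c j) := fun j => by
        show (∑ w : I → ZMod 6, F w * zbar (w j)) * c j = _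
        rw [Finset.sum_mul]
        exact Finset.sum_congr rfl fun w _ => by ring
      rw [Finset.sum_congr rfl fun j _ => hp j, Finset.sum_comm]
      exact Finset.sum_congr rfl fun w _ => by rw [La, Finset.mul_sum]
    have h3 : ∑ w, V w * La c w = 0 := by
      have := hV (La c) (La_mem_Dspan hc)
      rwa [ipF] at this
    have h2 : ∑ w, F w * La c w = ip2 a c + (ip2 b c + 0) := by
      have hp : ∀ w, F w * La c w
          = xi a w * La c w + (xi b w * La c w + V w * La c w) := fun w => by
        show (xi a w + (xi b w + V w)) * La c w = _
        ring
      rw [Finset.sum_congr rfl fun w _ => hp w, Finset.sum_add_distrib,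
        Finset.sum_add_distrib, h3]
      have ha := ipF_xi_La a c; rw [ipF] at ha
      have hb := ipF_xi_La b c; rw [ipF] at hb
      rw [ha, hb]
    have h4 : ip2 (fun j => a j + b j) c = ip2 a c + ip2 b c := by
      rw [ip2, ip2, ip2, ← Finset.sum_add_distrib]
      exact Finset.sum_congr rfl fun j _ => by ring
    rw [h1, h2, h4, add_zero]
  set c' : I → ZMod 2 := fun j => m j + (a j + b j) with hc'
  have hc'perp : c' ∈ perp2 (C : Set (I → ZMod 2)) := by
    intro c hc
    have hsplit : ip2 c' c = ip2 m c + ip2 (fun j => a j + b j) c := by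
      rw [ip2, ip2, ip2, ← Finset.sum_add_distrib]
      refine Finset.sum_congr rfl fun j _ => ?_
      show (m j + (a j + b j)) * c j = _
      ring
    rw [hsplit, hkey c hc, CharTwo.add_self_eq_zero]
  have hbc' : ∀ j, (b + c') j = m j + a j := fun j => by
    show b j + (m j + (a j + b j)) = m j + a j
    calc b j + (m j + (a j + b j)) = m j + a j + (b j + b j) := by ring
      _ = m j + a j := by rw [CharTwo.add_self_eq_zero, add_zero]
  have hcard : hammingDist a (b + c') ≤ T.card := by
    have hfe : hammingDist a (b + c')
        = (Finset.univ.filter (fun j => a j ≠ (b + c') j)).card := rfl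
    rw [hfe]
    apply Finset.card_le_card
    intro j hj
    rw [Finset.mem_filter] at hj
    rw [hT, Finset.mem_filter]
    refine ⟨Finset.mem_univ _, ?_⟩
    intro hNj
    apply hj.2
    rw [hbc' j, hmT j hNj, zero_add]
  have hd_le : quotDistBy (fun u v => (hammingDist u v : ℝ))
      (perp2 (C : Set (I → ZMod 2))) a b ≤ ((hammingDist a (b + c') : ℕ) : ℝ) := by
    apply csInf_le
    · refine ⟨0, ?_⟩
      rintro r ⟨v, hv, rfl⟩
      show (0:ℝ) ≤ ((hammingDist a (b + v) : ℕ) : ℝ)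
      positivity
    · exact ⟨c', hc'perp, rfl⟩
  have heven : ∀ j, N j ≠ 0 → 2 ≤ N j := by
    intro j hj
    have hz : ((N j : ℕ) : ZMod 2) = 0 := by
      have hNe : N j = ∑ i ∈ Finset.range ℓ,
          ite (zbar (x i j) ≠ zbar (x (i + 1) j)) 1 0 := Finset.card_filter _ _
      rw [hNe]
      push_cast
      calc ∑ i ∈ Finset.range ℓ,
            (if zbar (x i j) ≠ zbar (x (i + 1) j) then (1 : ZMod 2) else 0)
          = ∑ i ∈ Finset.range ℓ, (zbar (x (i + 1) j) - zbar (x i j)) := by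
            refine Finset.sum_congr rfl fun i _ => ?_
            rcases eq_or_ne (zbar (x i j)) (zbar (x (i + 1) j)) with h | h
            · rw [if_neg (by simp [h]), h, sub_self]
            · rw [if_pos h]
              revert h
              generalize zbar (x i j) = u
              generalize zbar (x (i + 1) j) = v
              revert u v
              decide
        _ = zbar (x ℓ j) - zbar (x 0 j) := Finset.sum_range_sub (fun i => zbar (x i j)) ℓ
        _ = 0 := by
            rw [h0, hl]
            simp [zbar_zero']
    have hdvd : 2 ∣ N j := (ZMod.natCast_eq_zero_iff (N j) 2).mp hz
    omega
  have hTsum : 2 * T.card ≤ ∑ j, N j := by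
    calc 2 * T.card = ∑ _j ∈ T, 2 := by rw [Finset.sum_const, smul_eq_mul, mul_comm]
      _ ≤ ∑ j ∈ T, N j :=
          Finset.sum_le_sum fun j hj => heven j (Finset.mem_filter.mp hj).2
      _ ≤ ∑ j, N j := Finset.sum_le_sum_of_subset (Finset.subset_univ T)
  have hswap : ∑ j, N j = ∑ i ∈ Finset.range ℓ,
      hammingDist (fun j => zbar (x i j)) (fun j => zbar (x (i + 1) j)) := by
    have h1 : ∀ i, hammingDist (fun j => zbar (x i j)) (fun j => zbar (x (i + 1) j))
        = ∑ j, ite (zbar (x i j) ≠ zbar (x (i + 1) j)) 1 0 := fun i =>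
      Finset.card_filter _ _
    have h2 : ∀ j, N j
        = ∑ i ∈ Finset.range ℓ, ite (zbar (x i j) ≠ zbar (x (i + 1) j)) 1 0 := fun j =>
      Finset.card_filter _ _
    rw [Finset.sum_congr rfl fun j _ => h2 j, Finset.sum_congr rfl fun i _ => h1 i,
      Finset.sum_comm]
  have hfinal : ((∑ j, N j : ℕ) : ℝ) ≤ ∑ i ∈ Finset.range ℓ, hamZ6 (x i) (x (i + 1)) := by
    rw [hswap]
    push_cast
    exact Finset.sum_le_sum fun i _ => hammingDist_le_hamZ6 (x i) (x (i + 1))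
  have hmid : 2 * ((hammingDist a (b + c') : ℕ) : ℝ) ≤ ((∑ j, N j : ℕ) : ℝ) := by
    have h1 : 2 * hammingDist a (b + c') ≤ 2 * T.card := by omega
    exact_mod_cast le_trans h1 hTsum
  linarith

/-! the upper bound tour -/

lemma tour_ub (e : I → ZMod 2) (A B : (I → ZMod 6) → ZMod 2)
    (hAB : ∀ p, A p + B p ≠ 0 → xi e p ≠ 0)
    (hk : 1 ≤ (Finset.univ.filter (fun j => e j ≠ 0)).card) :
    ((2 * (Finset.univ.filter (fun j => e j ≠ 0)).card : ℕ) : ℝ) ∈ toursSet A B := by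
  classical
  set s := Finset.univ.filter (fun j => e j ≠ 0) with hs
  set l := s.toList with hl
  have hlen : l.length = s.card := Finset.length_toList s
  set g : ℕ → I → ZMod 6 := fun i =>
    if h : i % 2 = 1 ∧ (i - 1) / 2 < l.length
    then Pi.single (l.get ⟨(i - 1) / 2, h.2⟩) 1 else 0 with hg
  refine ⟨2 * s.card, g, by omega, ?_, ?_, ?_, ?_⟩
  · simp only [hg]; rw [dif_neg (by omega)]
  · simp only [hg]; rw [dif_neg (by omega)]
  · intro p hp
    have hxe := hAB p hp
    have hex0 : ∃ x0 : I,
        (if p = (Pi.single x0 (1:ZMod 6) : I → ZMod 6) then e x0 else 0) ≠ 0 := by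
      by_contra hno
      push_neg at hno
      apply hxe
      rw [xi]
      exact Finset.sum_eq_zero fun x0 _ => hno x0
    obtain ⟨x0, hx0⟩ := hex0
    have hpx : p = Pi.single x0 1 := by
      by_contra h; rw [if_neg h] at hx0; exact hx0 rfl
    have hex : e x0 ≠ 0 := by rwa [if_pos hpx] at hx0
    have hmem : x0 ∈ l := by
      rw [hl, Finset.mem_toList, hs, Finset.mem_filter]
      exact ⟨Finset.mem_univ _, hex⟩
    obtain ⟨j, hj⟩ := List.mem_iff_get.mp hmem
    refine ⟨2 * j.1 + 1, by have := j.2; omega, ?_⟩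
    have hcond : (2 * j.1 + 1) % 2 = 1 ∧ (2 * j.1 + 1 - 1) / 2 < l.length :=
      ⟨by omega, by have := j.2; omega⟩
    simp only [hg]
    rw [dif_pos hcond]
    have hfin : (⟨(2 * j.1 + 1 - 1) / 2, hcond.2⟩ : Fin l.length) = j :=
      Fin.ext (by show (2 * j.1 + 1 - 1) / 2 = j.1; omega)
    rw [hfin, hj, hpx]
  · have hterm : ∀ i ∈ Finset.range (2 * s.card), hamZ6 (g i) (g (i + 1)) = 1 := by
      intro i hi
      rw [Finset.mem_range] at hi
      rcases Nat.even_or_odd i with he | ho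
      · obtain ⟨t, rfl⟩ := he
        simp only [hg]
        rw [dif_neg (by omega), dif_pos (⟨by omega, by omega⟩ :
          (t + t + 1) % 2 = 1 ∧ (t + t + 1 - 1) / 2 < l.length)]
        exact hamZ6_zero_single _
      · obtain ⟨t, rfl⟩ := ho
        simp only [hg]
        rw [dif_pos (⟨by omega, by omega⟩ :
          (2 * t + 1) % 2 = 1 ∧ (2 * t + 1 - 1) / 2 < l.length),
          dif_neg (by omega)]
        exact hamZ6_single_zero _
    rw [Finset.sum_congr rfl hterm, Finset.sum_const, Finset.card_range]
    simp

lemma quotHam_ge_one (C : Set (I → ZMod 2)) (a b : I → ZMod 2)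
    (hab : a - b ∉ perp2 C) :
    1 ≤ quotDistBy (fun u v => (hammingDist u v : ℝ)) (perp2 C) a b := by
  have hzero : (0 : I → ZMod 2) ∈ perp2 C := fun c _ => by simp [ip2]
  refine le_csInf ⟨_, 0, hzero, rfl⟩ ?_
  rintro r ⟨v, hv, rfl⟩
  show (1:ℝ) ≤ ((hammingDist a (b + v) : ℕ) : ℝ)
  have hne : hammingDist a (b + v) ≠ 0 := by
    intro h0
    apply hab
    have hav : a = b + v := hammingDist_eq_zero.mp h0
    have h2 : a - b = v := by rw [hav, add_sub_cancel_left]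
    rwa [h2]
  exact_mod_cast Nat.one_le_iff_ne_zero.mpr hne

lemma key_eq (C : Submodule (ZMod 2) (I → ZMod 2)) (hC : (fun _ => (1:ZMod 2)) ∈ C)
    (a b : I → ZMod 2) (hab : a - b ∉ perp2 (C : Set (I → ZMod 2))) :
    quotDistBy TSHam (DperpSet (C : Set (I → ZMod 2))) (xi a) (xi b) =
      2 * quotDistBy (fun u v => (hammingDist u v : ℝ)) (perp2 (C : Set (I → ZMod 2))) a b
        + 1 := by
  classical
  set d := quotDistBy (fun u v => (hammingDist u v : ℝ))
    (perp2 (C : Set (I → ZMod 2))) a b with hd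
  set Sd : Set ℝ := {r : ℝ | ∃ v ∈ perp2 (C : Set (I → ZMod 2)),
    r = ((hammingDist a (b + v) : ℕ) : ℝ)} with hSd
  have hdS : d = sInf Sd := rfl
  have hzero : (0 : I → ZMod 2) ∈ perp2 (C : Set (I → ZMod 2)) := fun c _ => by simp [ip2]
  have hSne : Sd.Nonempty := ⟨_, 0, hzero, rfl⟩
  have hfin : Sd.Finite := by
    have himg : Sd = (fun v => ((hammingDist a (b + v) : ℕ) : ℝ)) ''
        (perp2 (C : Set (I → ZMod 2))) := by
      ext r
      constructor
      · rintro ⟨v, hv, rfl⟩; exact ⟨v, hv, rfl⟩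
      · rintro ⟨v, hv, rfl⟩; exact ⟨v, hv, rfl⟩
    rw [himg]
    exact Set.Finite.image _ (Set.toFinite _)
  have hdmem : d ∈ Sd := hdS ▸ hSne.csInf_mem hfin
  obtain ⟨cs, hcs, hdval⟩ := hdmem
  have hd1 : (1:ℝ) ≤ d := quotHam_ge_one _ a b hab
  set e : I → ZMod 2 := a + (b + cs) with he
  have hkcard : (Finset.univ.filter (fun j => e j ≠ 0)).card = hammingDist a (b + cs) := by
    have hfe : hammingDist a (b + cs)
        = (Finset.univ.filter (fun j => a j ≠ (b + cs) j)).card := rfl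
    rw [hfe]
    congr 1
    ext j
    simp only [Finset.mem_filter, Finset.mem_univ, true_and]
    have hcongr : e j = a j + (b j + cs j) := rfl
    rw [hcongr]
    constructor
    · intro hne heq
      apply hne
      rw [z2_add_eq_zero]
      exact heq
    · intro hne heq
      exact hne ((z2_add_eq_zero _ _).mp heq)
  have hk1 : 1 ≤ (Finset.univ.filter (fun j => e j ≠ 0)).card := by
    rw [hkcard]
    have : hammingDist a (b + cs) ≠ 0 := by
      intro h0
      apply hab
      have hav : a = b + cs := hammingDist_eq_zero.mp h0
      have h2 : a - b = cs := by rw [hav, add_sub_cancel_left]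
      rwa [h2]
    omega
  have hxiE : xi e = xi a + (xi b + xi cs) := by rw [he, xi_add, xi_add]
  have hxics : xi cs ∈ DperpSet (C : Set (I → ZMod 2)) := (xi_mem_iff C hC cs).mpr hcs
  have hne0 : xi a ≠ xi b + xi cs := by
    intro hEq
    obtain ⟨j, hj⟩ := Finset.card_pos.mp (by omega :
      0 < (Finset.univ.filter (fun j => e j ≠ 0)).card)
    have hj2 := (Finset.mem_filter.mp hj).2
    apply hj2
    have h1 := congrFun hEq (Pi.single j 1)
    rw [xi_apply_single] at h1
    have h2 : (xi b + xi cs) (Pi.single j (1:ZMod 6)) = b j + cs j := by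
      rw [Pi.add_apply, xi_apply_single, xi_apply_single]
    rw [h2] at h1
    show e j = 0
    have hcongr : e j = a j + (b j + cs j) := rfl
    rw [hcongr, h1, CharTwo.add_self_eq_zero]
  have hinner : sInf (toursSet (xi a) (xi b + xi cs)) = 2 * d := by
    have hub := tour_ub e (xi a) (xi b + xi cs)
      (fun p hp => by rw [hxiE]; exact hp) hk1
    have hval : ((2 * (Finset.univ.filter (fun j => e j ≠ 0)).card : ℕ) : ℝ) = 2 * d := by
      rw [hkcard, hdval]
      push_cast
      ring
    apply le_antisymm
    · calc sInf (toursSet (xi a) (xi b + xi cs))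
          ≤ ((2 * (Finset.univ.filter (fun j => e j ≠ 0)).card : ℕ) : ℝ) :=
            csInf_le ⟨0, fun L hL => toursSet_nonneg _ _ L hL⟩ hub
        _ = 2 * d := hval
    · refine le_csInf ⟨_, hub⟩ ?_
      rintro L ⟨ℓ, x, h1ℓ, hx0, hxl, hvis, rfl⟩
      exact tour_lb C a b (xi cs) hxics ℓ x hx0 hxl hvis
  have hTSval : TSHam (xi a) (xi b + xi cs) = 2 * d + 1 := by
    rw [TSHam_eq, if_neg hne0, hinner]
    ring
  apply le_antisymm
  · apply csInf_le
    · refine ⟨0, ?_⟩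
      rintro r ⟨V, hV, rfl⟩
      exact TSHam_nonneg _ _
    · exact ⟨xi cs, hxics, hTSval.symm⟩
  · refine le_csInf ⟨_, xi cs, hxics, rfl⟩ ?_
    rintro r ⟨V, hV, rfl⟩
    have hABne : xi a ≠ xi b + V := by
      intro hEq
      apply hab
      have hV2 : V = xi (a + b) := by
        funext w
        have hw := congrFun hEq w
        rw [Pi.add_apply] at hw
        have h1 : V w = xi a w - xi b w := by rw [hw]; ring
        rw [xi_add, Pi.add_apply, h1, CharTwo.sub_eq_add]
      have habperp : a + b ∈ perp2 (C : Set (I → ZMod 2)) :=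
        (xi_mem_iff C hC (a + b)).mp (hV2 ▸ hV)
      have hsub : a - b = a + b := by
        funext j
        exact CharTwo.sub_eq_add (a j) (b j)
      rwa [hsub]
    rw [TSHam_eq, if_neg hABne]
    have hlow : 2 * d ≤ sInf (toursSet (xi a) (xi b + V)) := by
      apply le_csInf (toursSet_nonempty _ _)
      rintro L ⟨ℓ, x, h1ℓ, hx0, hxl, hvis, rfl⟩
      exact tour_lb C a b V hV ℓ x hx0 hxl hvis
    linarith

end KN
end KNauxSection

/-- With `C`, `D` as in the Khot–Naor construction, the map
`κ° : a ↦ ξ(a) + D^⊥` is `Z₂`-linear with kernel exactly `C^⊥`, and for cosets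
`a + C^⊥ ≠ b + C^⊥` one has
`TS_{Ham/D^⊥}(κ°a, κ°b) = 2 ⬝ d_{Ham/C^⊥}(a + C^⊥, b + C^⊥) + 1`;
consequently the induced injection `κ : Z₂^I/C^⊥ → Z₂^{Z₆^I}/D^⊥` is a bi-Lipschitz
embedding with distortion at most `2`. -/
theorem cube_quotient_embeds_in_TS_quotient {I : Type*} [Fintype I] [Nonempty I]
    (C : Submodule (ZMod 2) (I → ZMod 2)) (hC : (fun _ => (1 : ZMod 2)) ∈ C) :
    (∀ a b : I → ZMod 2,
      xi (a + b) - (xi a + xi b) ∈ DperpSet (C : Set (I → ZMod 2))) ∧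
    (∀ a : I → ZMod 2,
      xi a ∈ DperpSet (C : Set (I → ZMod 2)) ↔ a ∈ perp2 (C : Set (I → ZMod 2))) ∧
    (∀ a b : I → ZMod 2, a - b ∉ perp2 (C : Set (I → ZMod 2)) →
      quotDistBy TSHam (DperpSet (C : Set (I → ZMod 2))) (xi a) (xi b) =
        2 * quotDistBy (fun u v => (hammingDist u v : ℝ))
          (perp2 (C : Set (I → ZMod 2))) a b + 1) ∧
    distortionOn
        (fun a b : I → ZMod 2 =>
          quotDistBy (fun u v => (hammingDist u v : ℝ)) (perp2 (C : Set (I → ZMod 2))) a b)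
        (fun A B : (I → ZMod 6) → ZMod 2 =>
          quotDistBy TSHam (DperpSet (C : Set (I → ZMod 2))) A B)
        (fun a b : I → ZMod 2 => a - b ∉ perp2 (C : Set (I → ZMod 2))) xi ≤ 2 := by
    classical
  refine ⟨?_, ?_, ?_, ?_⟩
  · intro a b
    rw [KN.xi_add a b, sub_self]
    intro D' hD'
    simp [ipF]
  · exact KN.xi_mem_iff C hC
  · exact KN.key_eq C hC
  · rw [distortionOn]
    set P : (I → ZMod 2) → (I → ZMod 2) → Prop :=
      fun a b => a - b ∉ perp2 (C : Set (I → ZMod 2)) with hP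
    set sig : (I → ZMod 2) → (I → ZMod 2) → ℝ := fun a b =>
      quotDistBy (fun u v => (hammingDist u v : ℝ)) (perp2 (C : Set (I → ZMod 2))) a b
      with hsig
    set th : ((I → ZMod 6) → ZMod 2) → ((I → ZMod 6) → ZMod 2) → ℝ := fun A B =>
      quotDistBy TSHam (DperpSet (C : Set (I → ZMod 2))) A B with hth
    have hkey : ∀ u v : I → ZMod 2, P u v → th (xi u) (xi v) = 2 * sig u v + 1 :=
      fun u v huv => KN.key_eq C hC u v huv
    have hge1 : ∀ u v : I → ZMod 2, P u v → 1 ≤ sig u v :=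
      fun u v huv => KN.quotHam_ge_one _ u v huv
    have hS1 : sSup {r : ℝ | ∃ u v, P u v ∧ r = th (xi u) (xi v) / sig u v} ≤ 3 := by
      apply Real.sSup_le ?_ (by norm_num)
      rintro r ⟨u, v, huv, rfl⟩
      have h1 := hge1 u v huv
      rw [hkey u v huv, div_le_iff₀ (by linarith)]
      linarith
    have hS2 : sSup {r : ℝ | ∃ u v, P u v ∧ r = sig u v / th (xi u) (xi v)} ≤ 1 / 2 := by
      apply Real.sSup_le ?_ (by norm_num)
      rintro r ⟨u, v, huv, rfl⟩
      have h1 := hge1 u v huv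
      rw [hkey u v huv, div_le_iff₀ (by linarith)]
      linarith
    have hS1n : 0 ≤ sSup {r : ℝ | ∃ u v, P u v ∧ r = th (xi u) (xi v) / sig u v} := by
      apply Real.sSup_nonneg
      rintro r ⟨u, v, huv, rfl⟩
      have h1 := hge1 u v huv
      rw [hkey u v huv]
      positivity
    have hS2n : 0 ≤ sSup {r : ℝ | ∃ u v, P u v ∧ r = sig u v / th (xi u) (xi v)} := by
      apply Real.sSup_nonneg
      rintro r ⟨u, v, huv, rfl⟩
      have h1 := hge1 u v huv
      rw [hkey u v huv]
      positivity
    calc sSup {r : ℝ | ∃ u v, P u v ∧ r = th (xi u) (xi v) / sig u v} *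
          sSup {r : ℝ | ∃ u v, P u v ∧ r = sig u v / th (xi u) (xi v)}
        ≤ 3 * (1 / 2) := mul_le_mul hS1 hS2 hS2n (by norm_num)
      _ ≤ 2 := by norm_num
end

section
/- Let X be a set, I₁,…,I_m pairwise disjoint finite subsets of X, y₁,…,y_m distinct points of X ∖ (I₁∪…∪I_m), and let the maps Q_n be as defined below. Suppose η ∈ Z₂, u° ∈ Z₆^{⊕(X∖(I₁∪…∪I_m∪{y₁,…,y_m}))}, and for each n ≤ m we are given finitely many triples (u_i^{(n)}, W_i^{(n)}, u'^{(n)}_i), i = 1,…,i_n, with u_i^{(n)} ∈ Z₆^{⊕(X∖(I₁∪…∪I_n∪{y₁,…,y_n}))}, W_i^{(n)} ∈ Z₂^{Z₆^{I_n}}, u'^{(n)}_i ∈ Z₆, such that u_i^{(n)} restricted to X∖(I₁∪…∪I_m∪{y₁,…,y_m}) equals u° for all i,n. If Σ_{n=1}^m Σ_{i=1}^{i_n} Q_n(u_i^{(n)}, W_i^{(n)}, u'^{(n)}_i) equals η times the indicator function of {w ∈ Z₆^{⊕X} : w|_{X∖(I₁∪…∪I_m∪{y₁,…,y_m})} = u°},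 then η = 0 and Σ_{i=1}^{i_n} Q_n(u_i^{(n)}, W_i^{(n)}, u'^{(n)}_i) = 0 for each n ≤ m separately. -/
open scoped BigOperators
open scoped Classical
open MeasureTheory Filter
open scoped ENNReal NNReal

lemma aux_Q_ind {X : Type*} {m : ℕ} (y : Fin m → X)
    (F : Fin m → (X →₀ ZMod 6) → ZMod 2) (χf : (X →₀ ZMod 6) → ZMod 2)
    (h1 : ∀ (n k : Fin m), k ≠ n → (n : ℕ) ≤ (k : ℕ) → ∀ (w : X →₀ ZMod 6) (v : ZMod 6),
      F k (Finsupp.update w (y n) v) = F k w)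
    (h2 : ∀ (n : Fin m) (w : X →₀ ZMod 6),
      ∑ v ∈ ({0, 2, 4} : Finset (ZMod 6)), F n (Finsupp.update w (y n) v) = 0)
    (h3 : ∀ (n : Fin m) (w : X →₀ ZMod 6) (v : ZMod 6),
      χf (Finsupp.update w (y n) v) = χf w)
    (h4 : ∀ w, (∑ k : Fin m, F k w) = χf w) :
    (∀ w, χf w = 0) ∧ ∀ (n : Fin m) (w : X →₀ ZMod 6), F n w = 0 := by
  have hodd : ∀ c : ZMod 2, c + (c + c) = c := by decide
  have hsum024 : ∀ f : ZMod 6 → ZMod 2,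
      ∑ v ∈ ({0, 2, 4} : Finset (ZMod 6)), f v = f 0 + (f 2 + f 4) := by
    intro f
    rw [Finset.sum_insert (by decide), Finset.sum_insert (by decide), Finset.sum_singleton]
  have main : ∀ j : ℕ, ∀ w, (∑ k : Fin m, if j ≤ (k : ℕ) then F k w else 0) = χf w := by
    intro j
    induction j with
    | zero => intro w; simpa using h4 w
    | succ j ih =>
      intro w
      by_cases hjm : j < m
      · have e1 : ∀ k : Fin m,
            (∑ v ∈ ({0, 2, 4} : Finset (ZMod 6)),
              if j ≤ (k : ℕ) then F k (Finsupp.update w (y ⟨j, hjm⟩) v) else 0)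
            = (if j + 1 ≤ (k : ℕ) then F k w else 0) := by
          intro k
          by_cases hjk : j ≤ (k : ℕ)
          · simp only [if_pos hjk]
            by_cases hkn : k = ⟨j, hjm⟩
            · subst hkn
              rw [if_neg (by simp only [Fin.val_mk]; omega)]
              exact h2 _ w
            · have hne : (k : ℕ) ≠ j := fun e => hkn (Fin.ext e)
              rw [if_pos (by omega)]
              rw [Finset.sum_congr rfl fun v _ => h1 ⟨j, hjm⟩ k hkn hjk w v]
              rw [hsum024]
              exact hodd _
          · rw [Finset.sum_congr rfl fun v _ => if_neg hjk, Finset.sum_const_zero,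
              if_neg (by omega)]
        calc (∑ k : Fin m, if j + 1 ≤ (k : ℕ) then F k w else 0)
            = ∑ k : Fin m, ∑ v ∈ ({0, 2, 4} : Finset (ZMod 6)),
                (if j ≤ (k : ℕ) then F k (Finsupp.update w (y ⟨j, hjm⟩) v) else 0) :=
              Finset.sum_congr rfl fun k _ => (e1 k).symm
          _ = ∑ v ∈ ({0, 2, 4} : Finset (ZMod 6)), ∑ k : Fin m,
                (if j ≤ (k : ℕ) then F k (Finsupp.update w (y ⟨j, hjm⟩) v) else 0) :=
              Finset.sum_comm
          _ = ∑ v ∈ ({0, 2, 4} : Finset (ZMod 6)), χf w := by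
              refine Finset.sum_congr rfl fun v _ => ?_
              rw [ih (Finsupp.update w (y ⟨j, hjm⟩) v), h3]
          _ = χf w := by rw [hsum024]; exact hodd _
      · have e2 : ∀ k : Fin m, (if j + 1 ≤ (k : ℕ) then F k w else 0)
            = (if j ≤ (k : ℕ) then F k w else 0) := by
          intro k
          have hk : (k : ℕ) < m := k.isLt
          rw [if_neg (by omega), if_neg (by omega)]
        rw [Finset.sum_congr rfl fun k _ => e2 k]
        exact ih w
  constructor
  · intro w
    have h := main m w
    rw [Finset.sum_congr rfl (fun k _ => if_neg (by have := k.isLt; omega)),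
      Finset.sum_const_zero] at h
    exact h.symm
  · intro n w
    have ha := main (n : ℕ) w
    have hb := main ((n : ℕ) + 1) w
    have hsplit : ∀ k : Fin m, (if (n : ℕ) ≤ (k : ℕ) then F k w else 0)
        = (if (n : ℕ) + 1 ≤ (k : ℕ) then F k w else 0) + (if k = n then F k w else 0) := by
      intro k
      by_cases hkn : k = n
      · subst hkn; rw [if_pos le_rfl, if_neg (by omega), if_pos rfl, zero_add]
      · have hne : (k : ℕ) ≠ (n : ℕ) := fun e => hkn (Fin.ext e)
        by_cases hle : (n : ℕ) ≤ (k : ℕ)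
        · rw [if_pos hle, if_pos (by omega), if_neg hkn, add_zero]
        · rw [if_neg hle, if_neg (by omega), if_neg hkn, add_zero]
    rw [Finset.sum_congr rfl fun k _ => hsplit k, Finset.sum_add_distrib,
      Finset.sum_ite_eq' Finset.univ n (fun k => F k w), if_pos (Finset.mem_univ n)] at ha
    linear_combination ha - hb

/-- (Linear independence lemma for the maps `Qₙ`.)  If a finite sum of
functions `Qₙ(uᵢ⁽ⁿ⁾, Wᵢ⁽ⁿ⁾, u'ᵢ⁽ⁿ⁾)`, all of whose first arguments agree with a fixed
`u°` off `E_m = I₁ ∪ ⋯ ∪ I_m ∪ {y₁, …, y_m}`, equals `η` times the indicator of the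
cylinder `{w : w|_{X∖E_m} = u°}`, then `η = 0` and the inner sum over each scale `n`
vanishes separately. -/
theorem Qmaps_linearly_independent {X : Type*} (m : ℕ) (hm : 1 ≤ m)
    (I : Fin m → Finset X) (hIdisj : ∀ i j : Fin m, i ≠ j → ∀ x ∈ I i, x ∉ I j)
    (y : Fin m → X) (hyinj : Function.Injective y) (hyI : ∀ i j : Fin m, y i ∉ I j)
    (η : ZMod 2) (u0 : X →₀ ZMod 6)
    (iN : Fin m → ℕ)
    (u : (n : Fin m) → Fin (iN n) → (X →₀ ZMod 6))
    (W : (n : Fin m) → Fin (iN n) → (({x // x ∈ I n} → ZMod 6) → ZMod 2))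
    (u' : (n : Fin m) → Fin (iN n) → ZMod 6)
    -- each `u n i` lies in `Z₆^{⊕(X ∖ Eₙ)}`:
    (husupp : ∀ (n : Fin m) (i : Fin (iN n)) (x : X),
      (∃ k ≤ n, x ∈ I k ∨ x = y k) → u n i x = 0)
    -- `u°` lies in `Z₆^{⊕(X ∖ E_m)}`:
    (hu0supp : ∀ x : X, (∃ k : Fin m, x ∈ I k ∨ x = y k) → u0 x = 0)
    -- each `u n i` agrees with `u°` off `E_m`:
    (hagree : ∀ (n : Fin m) (i : Fin (iN n)) (x : X),
      ¬ (∃ k : Fin m, x ∈ I k ∨ x = y k) → u n i x = u0 x)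
    -- the sum of all the `Qₙ`'s is `η` times the indicator of the cylinder over `u°`:
    (hsum : ∀ w : X →₀ ZMod 6,
      (∑ n : Fin m, ∑ i : Fin (iN n),
        Qmap {x : X | ∃ k ≤ n, x ∈ I k ∨ x = y k} (I n) (y n)
          (u n i) (W n i) (u' n i) w) =
      (if ∀ x : X, ¬ (∃ k : Fin m, x ∈ I k ∨ x = y k) → w x = u0 x then η else 0)) :
    η = 0 ∧ ∀ n : Fin m, ∀ w : X →₀ ZMod 6,
      (∑ i : Fin (iN n),
        Qmap {x : X | ∃ k ≤ n, x ∈ I k ∨ x = y k} (I n) (y n)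
          (u n i) (W n i) (u' n i) w) = 0 := by
  classical
  have hupd : ∀ (w : X →₀ ZMod 6) (p : X) (v : ZMod 6) (x : X),
      (Finsupp.update w p v) x = if x = p then v else w x := by
    intro w p v x
    rw [Finsupp.coe_update]
    exact Function.update_apply _ _ _ _
  have hA : ∀ a : ZMod 6, Acal (0 - a) + (Acal (2 - a) + Acal (4 - a)) = 0 := by decide
  have hsum024 : ∀ f : ZMod 6 → ZMod 2,
      ∑ v ∈ ({0, 2, 4} : Finset (ZMod 6)), f v = f 0 + (f 2 + f 4) := by
    intro f
    rw [Finset.sum_insert (by decide), Finset.sum_insert (by decide), Finset.sum_singleton]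
  have key : ∀ (n k : Fin m), n ≤ k → ∀ (i : Fin (iN k)) (w : X →₀ ZMod 6) (v : ZMod 6),
      Qmap {x : X | ∃ l ≤ k, x ∈ I l ∨ x = y l} (I k) (y k) (u k i) (W k i) (u' k i)
        (Finsupp.update w (y n) v)
      = (if ∀ x ∉ {x : X | ∃ l ≤ k, x ∈ I l ∨ x = y l}, w x = u k i x then 1 else 0)
        * W k i (fun x => w x.1)
        * Acal ((if k = n then v else w (y k)) - u' k i) := by
    intro n k hnk i w v
    simp only [Qmap]
    congr 1
    · congr 1
      · refine if_congr ?_ rfl rfl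
        constructor
        · intro h x hx
          have hxn : x ≠ y n := fun he => hx ⟨n, hnk, Or.inr he⟩
          have hh := h x hx
          rwa [hupd, if_neg hxn] at hh
        · intro h x hx
          have hxn : x ≠ y n := fun he => hx ⟨n, hnk, Or.inr he⟩
          rw [hupd, if_neg hxn]
          exact h x hx
      · congr 1
        funext x
        have hxn : (x : X) ≠ y n := fun he => hyI n k (he ▸ x.2)
        rw [hupd, if_neg hxn]
    · congr 1
      rw [hupd]
      by_cases hk : k = n
      · rw [if_pos (by rw [hk]), if_pos hk]
      · rw [if_neg (fun he => hk (hyinj he)), if_neg hk]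
  obtain ⟨hχ0, hF0⟩ := aux_Q_ind y
    (fun k w => ∑ i : Fin (iN k),
      Qmap {x : X | ∃ l ≤ k, x ∈ I l ∨ x = y l} (I k) (y k) (u k i) (W k i) (u' k i) w)
    (fun w => if ∀ x : X, ¬ (∃ k : Fin m, x ∈ I k ∨ x = y k) → w x = u0 x then η else 0)
    (by
      intro n k hkn hnk w v
      refine Finset.sum_congr rfl fun i _ => ?_
      rw [key n k hnk i w v, if_neg hkn]
      rfl)
    (by
      intro n w
      rw [Finset.sum_comm]
      refine Finset.sum_eq_zero fun i _ => ?_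
      rw [Finset.sum_congr rfl fun v _ => by rw [key n n le_rfl i w v, if_pos rfl]]
      rw [hsum024, ← mul_add, ← mul_add, hA, mul_zero])
    (by
      intro n w v
      refine if_congr ?_ rfl rfl
      constructor
      · intro h x hx
        have hxn : x ≠ y n := fun he => hx ⟨n, Or.inr he⟩
        have hh := h x hx
        rwa [hupd, if_neg hxn] at hh
      · intro h x hx
        have hxn : x ≠ y n := fun he => hx ⟨n, Or.inr he⟩
        rw [hupd, if_neg hxn]
        exact h x hx)
    hsum
  constructor
  · have h : (if ∀ x : X, ¬ (∃ k : Fin m, x ∈ I k ∨ x = y k) → u0 x = u0 x then η else 0)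
        = 0 := hχ0 u0
    rwa [if_pos (fun x _ => rfl)] at h
  · intro n w
    exact hF0 n w
end
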